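/- arXiv:2001.03710 — 8 statements merged into one kernel-verified Lean document; each statement's English description precedes it below -/
import Mathlib

section
/- Consider the unsupervised setting: a collection 𝒫 of probability measures on 𝒳^∞ together with a measurable loss ℓ : 𝒫 × 𝒳^* × 𝒴 → {0,1}. If there exists a nesting {𝒫_i : i ≥ 1} of 𝒫 such that for every i ≥ 1 and every η > 0 the pair (𝒫_i, ℓ) is η-predictable, then (𝒫, ℓ) is e.a.s.-predictable. -/
/-!
Pick, for each `i`, a predictor `Φ i` that from some time `N i` on errs on `𝒫_i` with
probability at most `2⁻ⁱ`, and at time `n` follow the largest `i ≤ n` with `N i ≤ n`. This index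
tends to infinity, so a path with infinitely many errors of the combined predictor lies in
infinitely many of the events "`Φ i` errs after time `N i`". For `p ∈ 𝒫_j` these events have
probabilities at most `2⁻ⁱ` as soon as `i ≥ j`, a summable bound, so by Borel–Cantelli almost
every path lies in only finitely many of them.
-/

open MeasureTheory Set ENNReal

namespace Stmt1

variable {X Y : Type*} [MeasurableSpace X]

/-- In the unsupervised setting, with loss `ℓ : 𝒫 × 𝒳^* × 𝒴 → {0,1}` (Bool-valued, `true` =
loss 1), `ErrAt ℓ p Φ ω n` says that the predictor `Φ` incurs a loss at time `n+1` on the sample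
path `ω` when the model `p` is in force. -/
def ErrAt (ℓ : Measure (ℕ → X) → (n : ℕ) → (Fin n → X) → Y → Bool)
    (p : Measure (ℕ → X)) (Φ : (n : ℕ) → (Fin n → X) → Y) (ω : ℕ → X) (n : ℕ) : Prop :=
  ℓ p (n + 1) (fun i => ω i.val) (Φ n (fun i => ω i.val)) = true

/-- `(𝒫, ℓ)` is `η`-predictable: there are a predictor `Φ` and a sample size `N` such that for
every `p ∈ 𝒫`, the probability that `Φ` incurs any loss from time `N` on is at most `η`. -/
def EtaPredictable (P : Set (Measure (ℕ → X)))
    (ℓ : Measure (ℕ → X) → (n : ℕ) → (Fin n → X) → Y → Bool) (η : ℝ≥0∞) : Prop :=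
  ∃ (Φ : (n : ℕ) → (Fin n → X) → Y) (N : ℕ), ∀ p ∈ P,
    p {ω | ∃ n, N ≤ n ∧ ErrAt ℓ p Φ ω n} ≤ η

/-- `(𝒫, ℓ)` is e.a.s.-predictable: there is a predictor `Φ` such that for every `p ∈ 𝒫`,
with probability 1 only finitely many losses are incurred. -/
def EASPredictable (P : Set (Measure (ℕ → X)))
    (ℓ : Measure (ℕ → X) → (n : ℕ) → (Fin n → X) → Y → Bool) : Prop :=
  ∃ Φ : (n : ℕ) → (Fin n → X) → Y, ∀ p ∈ P,
    p {ω | {n | ErrAt ℓ p Φ ω n}.Finite} = 1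

open Filter

theorem measure_limsup_atTop_eq_zero_of_eventually_le {α : Type*} [MeasurableSpace α]
    {μ : Measure α} {s : ℕ → Set α} {η : ℕ → ℝ≥0∞} (hη : ∑' i, η i ≠ ∞)
    (hs : ∀ᶠ i in atTop, μ (s i) ≤ η i) : μ (limsup s atTop) = 0 := by
  obtain ⟨j, hj⟩ := eventually_atTop.mp hs
  rw [← limsup_nat_add s j]
  refine measure_limsup_atTop_eq_zero (ne_top_of_le_ne_top hη ?_)
  calc ∑' i, μ (s (i + j)) ≤ ∑' i, η (i + j) :=
        ENNReal.tsum_le_tsum fun i => hj _ (Nat.le_add_left j i)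
    _ ≤ ∑' i, η i := ENNReal.tsum_comp_le_tsum_of_injective (add_left_injective j) η

def switchingPredictor (Φ : ℕ → (n : ℕ) → (Fin n → X) → Y) (N : ℕ → ℕ) :
    (n : ℕ) → (Fin n → X) → Y :=
  fun n => Φ (Nat.findGreatest (fun i => N i ≤ n) n) n

def lateErrors (ℓ : Measure (ℕ → X) → (n : ℕ) → (Fin n → X) → Y → Bool)
    (p : Measure (ℕ → X)) (Φ : (n : ℕ) → (Fin n → X) → Y) (N : ℕ) : Set (ℕ → X) :=
  {ω | ∃ n, N ≤ n ∧ ErrAt ℓ p Φ ω n}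

theorem setOf_errAt_switchingPredictor_infinite_subset_limsup
    (ℓ : Measure (ℕ → X) → (n : ℕ) → (Fin n → X) → Y → Bool) (p : Measure (ℕ → X))
    (Φ : ℕ → (n : ℕ) → (Fin n → X) → Y) (N : ℕ → ℕ) :
    {ω | {n | ErrAt ℓ p (switchingPredictor Φ N) ω n}.Infinite} ⊆
      limsup (fun i => lateErrors ℓ p (Φ i) (N i)) atTop := by
  intro ω hω
  rw [mem_limsup_iff_frequently_mem, frequently_atTop]
  intro k
  obtain ⟨n, hn_err, hn_gt⟩ := Set.Infinite.exists_gt hω (max k (N k))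
  have hk : k ≤ n := (le_max_left _ _).trans hn_gt.le
  have hN : N k ≤ n := (le_max_right _ _).trans hn_gt.le
  exact ⟨_, Nat.le_findGreatest hk hN, n, Nat.findGreatest_spec (P := fun i => N i ≤ n) hk hN,
    hn_err⟩

/-- In the unsupervised setting, if there is a nesting `{𝒫_i}` of `𝒫` such that
each `(𝒫_i, ℓ)` is `η`-predictable for every `η > 0`, then `(𝒫, ℓ)` is e.a.s.-predictable. -/
theorem easPredictable_of_nesting_etaPredictable
    (P : Set (Measure (ℕ → X))) (hP : ∀ p ∈ P, IsProbabilityMeasure p)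
    (ℓ : Measure (ℕ → X) → (n : ℕ) → (Fin n → X) → Y → Bool)
    (Q : ℕ → Set (Measure (ℕ → X)))
    (hmono : ∀ i, Q i ⊆ Q (i + 1)) (hunion : (⋃ i, Q i) = P)
    (hη : ∀ i, ∀ η : ℝ≥0∞, 0 < η → EtaPredictable (Q i) ℓ η) :
    EASPredictable P ℓ := by
  choose Φ N hΦ using fun i => hη i (2⁻¹ ^ i) (ENNReal.pow_pos (by simp) i)
  refine ⟨switchingPredictor Φ N, fun p hp => ?_⟩
  obtain ⟨j, hj⟩ := mem_iUnion.mp (hunion ▸ hp)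
  have hlate : ∀ᶠ i in atTop, p (lateErrors ℓ p (Φ i) (N i)) ≤ 2⁻¹ ^ i :=
    eventually_atTop.mpr ⟨j, fun i hi => hΦ i p (monotone_nat_of_le_succ hmono hi hj)⟩
  have hnull : p {ω | {n | ErrAt ℓ p (switchingPredictor Φ N) ω n}.Infinite} = 0 :=
    measure_mono_null (setOf_errAt_switchingPredictor_infinite_subset_limsup ℓ p Φ N)
      (measure_limsup_atTop_eq_zero_of_eventually_le (by simp) hlate)
  have := hP p hp
  exact (measure_congr (ae_eq_univ.mpr hnull)).trans measure_univ

end Stmt1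
end

section
/- Back and forth lemma: Let 𝒫_1, 𝒫_2, … be countably many collections of probability measures on 𝒳^∞, each e.a.s.-predictable with respect to the same supervised loss ℓ : 𝒳^* × 𝒴 → {0,1}. Then the union 𝒫 = ⋃_{i=1}^∞ 𝒫_i is also e.a.s.-predictable with loss ℓ. -/
/-!
Follow the leader among the given predictors `Φ₀, Φ₁, …`, scoring each by its number of
mistakes so far plus its index. On a path where `Φⱼ` errs only `M` times, every score of a
leader stays at most `V = M + j`. A mistake of the combined predictor is a mistake of the
current leader and raises that leader's count, so the pair (leader, its mistake count) never
repeats at such times, and it ranges over the finite set `[0, V]²`.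
-/

open MeasureTheory Set ENNReal

namespace Stmt3

variable {X Y : Type*} [MeasurableSpace X]

/-- In the supervised setting, with loss `ℓ : 𝒳^* × 𝒴 → {0,1}` (Bool-valued, `true` = loss 1),
`ErrAt ℓ Φ ω n` says that the predictor `Φ` incurs a loss at time `n+1` on the sample path `ω`. -/
def ErrAt (ℓ : (n : ℕ) → (Fin n → X) → Y → Bool)
    (Φ : (n : ℕ) → (Fin n → X) → Y) (ω : ℕ → X) (n : ℕ) : Prop :=
  ℓ (n + 1) (fun i => ω i.val) (Φ n (fun i => ω i.val)) = true

/-- `(𝒫, ℓ)` is e.a.s.-predictable: there is a predictor `Φ` such that for every `p ∈ 𝒫`,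
with probability 1 only finitely many losses are incurred. -/
def EASPredictable (P : Set (Measure (ℕ → X)))
    (ℓ : (n : ℕ) → (Fin n → X) → Y → Bool) : Prop :=
  ∃ Φ : (n : ℕ) → (Fin n → X) → Y, ∀ p ∈ P,
    p {ω | {n | ErrAt ℓ Φ ω n}.Finite} = 1

end Stmt3

namespace Stmt3

theorem finite_setOf_leader_mistake (E : ℕ → ℕ → Prop) [∀ i, DecidablePred (E i)]
    (lead : ℕ → ℕ) (hlead : ∀ n i, Nat.count (E (lead n)) n + lead n ≤ Nat.count (E i) n + i)
    {j : ℕ} (hj : {n | E j n}.Finite) : {n | E (lead n) n}.Finite := by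
  set V := hj.toFinset.card + j
  have hbound : ∀ n, Nat.count (E (lead n)) n + lead n ≤ V := fun n =>
    (hlead n j).trans (Nat.add_le_add_right (Nat.count_le_card hj n) j)
  refine Finite.of_injOn (f := fun n => (lead n, Nat.count (E (lead n)) n))
    (t := Iic V ×ˢ Iic V) (fun n _ => ⟨?_, ?_⟩) ?_ ((finite_Iic V).prod (finite_Iic V))
  · exact (Nat.le_add_left _ _).trans (hbound n)
  · exact (Nat.le_add_right _ _).trans (hbound n)
  · intro n hn n' hn' heq
    obtain ⟨hlead_eq, hcount_eq⟩ := Prod.mk.inj heq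
    rw [mem_ofPred_eq, hlead_eq] at hn
    rw [hlead_eq] at hcount_eq
    exact Nat.count_injective hn hn' hcount_eq

variable {X Y : Type*}

def HistErrAt (ℓ : (n : ℕ) → (Fin n → X) → Y → Bool) (Φ : (n : ℕ) → (Fin n → X) → Y)
    {n : ℕ} (h : Fin n → X) (m : ℕ) : Prop :=
  ∃ hm : m < n, ℓ (m + 1) (fun k => h (Fin.castLE hm k)) (Φ m (fun k => h (Fin.castLE hm.le k)))
    = true

theorem histErrAt_restrict_iff (ℓ : (n : ℕ) → (Fin n → X) → Y → Bool)
    (Φ : (n : ℕ) → (Fin n → X) → Y) (ω : ℕ → X) (n m : ℕ) :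
    HistErrAt ℓ Φ (fun i : Fin n => ω i) m ↔ m < n ∧ ErrAt ℓ Φ ω m :=
  show (∃ _ : m < n, ErrAt ℓ Φ ω m) ↔ _ from exists_prop

theorem count_histErrAt_restrict (ℓ : (n : ℕ) → (Fin n → X) → Y → Bool)
    (Φ : (n : ℕ) → (Fin n → X) → Y) (ω : ℕ → X) (n : ℕ)
    [DecidablePred (HistErrAt ℓ Φ (fun i : Fin n => ω i))] [DecidablePred (ErrAt ℓ Φ ω)] :
    Nat.count (HistErrAt ℓ Φ (fun i : Fin n => ω i)) n = Nat.count (ErrAt ℓ Φ ω) n := by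
  simp only [Nat.count_eq_card_filter_range]
  congr 1
  refine Finset.filter_congr fun m hm => ?_
  rw [histErrAt_restrict_iff, and_iff_right (Finset.mem_range.mp hm)]

open Classical in
noncomputable def leader (ℓ : (n : ℕ) → (Fin n → X) → Y → Bool)
    (Φs : ℕ → (n : ℕ) → (Fin n → X) → Y) {n : ℕ} (h : Fin n → X) : ℕ :=
  Function.argmin fun i => Nat.count (HistErrAt ℓ (Φs i) h) n + i

open Classical in
theorem leader_score_le (ℓ : (n : ℕ) → (Fin n → X) → Y → Bool)
    (Φs : ℕ → (n : ℕ) → (Fin n → X) → Y) {n : ℕ} (h : Fin n → X) (i : ℕ) :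
    Nat.count (HistErrAt ℓ (Φs (leader ℓ Φs h)) h) n + leader ℓ Φs h ≤
      Nat.count (HistErrAt ℓ (Φs i) h) n + i :=
  Function.argmin_le (fun i => Nat.count (HistErrAt ℓ (Φs i) h) n + i) i

noncomputable def followLeader (ℓ : (n : ℕ) → (Fin n → X) → Y → Bool)
    (Φs : ℕ → (n : ℕ) → (Fin n → X) → Y) (n : ℕ) (h : Fin n → X) : Y :=
  Φs (leader ℓ Φs h) n h

theorem finite_setOf_errAt_followLeader (ℓ : (n : ℕ) → (Fin n → X) → Y → Bool)
    (Φs : ℕ → (n : ℕ) → (Fin n → X) → Y) (ω : ℕ → X) {j : ℕ}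
    (hj : {n | ErrAt ℓ (Φs j) ω n}.Finite) :
    {n | ErrAt ℓ (followLeader ℓ Φs) ω n}.Finite := by
  classical
  refine finite_setOf_leader_mistake (fun i => ErrAt ℓ (Φs i) ω)
    (fun n => leader ℓ Φs (fun k : Fin n => ω k)) (fun n i => ?_) hj
  have := leader_score_le ℓ Φs (fun k : Fin n => ω k) i
  rwa [count_histErrAt_restrict, count_histErrAt_restrict] at this

variable [MeasurableSpace X]

/-- **Back and forth lemma.** A countable union of e.a.s.-predictable classes,
all with the same supervised loss `ℓ`, is e.a.s.-predictable. -/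
theorem easPredictable_iUnion
    (P : ℕ → Set (Measure (ℕ → X))) (hP : ∀ i, ∀ p ∈ P i, IsProbabilityMeasure p)
    (ℓ : (n : ℕ) → (Fin n → X) → Y → Bool)
    (heas : ∀ i, EASPredictable (P i) ℓ) :
    EASPredictable (⋃ i, P i) ℓ := by
  choose Φs hΦs using heas
  refine ⟨followLeader ℓ Φs, fun p hp => ?_⟩
  obtain ⟨j, hpj⟩ := mem_iUnion.mp hp
  have := hP j p hpj
  refine le_antisymm prob_le_one ((hΦs j p hpj).symm.le.trans (measure_mono ?_))
  exact fun ω => finite_setOf_errAt_followLeader ℓ Φs ω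

end Stmt3
end

section
/- Let 𝒫_1 ⊆ 𝒫_2 ⊆ ⋯ be countably many nested collections of probability measures on 𝒳^∞ such that for every i, the pair (𝒫_i, ℓ) is 2^{−i}-predictable with respect to the loss ℓ. Then 𝒫 = ⋃_{i∈ℕ} 𝒫_i is e.a.s.-predictable with loss ℓ. -/
/-!
Run the predictor `Φ k` witnessing `2⁻ᵏ`-predictability of `Q k` at every time `n` at which `k`
is the largest index `k ≤ n` whose sample size `N k` has been reached. A model `p ∈ Q i` lies in
every later class, so the events "`Φ k` errs after time `N k`" have `p`-probabilities eventually
below `2⁻ᵏ`; by Borel–Cantelli almost every path lies in only finitely many of them. Since the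
index used at time `n` tends to infinity and its sample size is at most `n`, a path on which the
combined predictor errs infinitely often lies in infinitely many of these events.
-/

open MeasureTheory Set ENNReal

namespace Stmt4

variable {X Y : Type*} [MeasurableSpace X]

/-- In the unsupervised setting, with loss `ℓ : 𝒫 × 𝒳^* × 𝒴 → {0,1}` (Bool-valued, `true` =
loss 1), `ErrAt ℓ p Φ ω n` says that the predictor `Φ` incurs a loss at time `n+1` on the sample
path `ω` when the model `p` is in force. -/
def ErrAt (ℓ : Measure (ℕ → X) → (n : ℕ) → (Fin n → X) → Y → Bool)
    (p : Measure (ℕ → X)) (Φ : (n : ℕ) → (Fin n → X) → Y) (ω : ℕ → X) (n : ℕ) : Prop :=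
  ℓ p (n + 1) (fun i => ω i.val) (Φ n (fun i => ω i.val)) = true

/-- `(𝒫, ℓ)` is `η`-predictable: there are a predictor `Φ` and a sample size `N` such that for
every `p ∈ 𝒫`, the probability that `Φ` incurs any loss from time `N` on is at most `η`. -/
def EtaPredictable (P : Set (Measure (ℕ → X)))
    (ℓ : Measure (ℕ → X) → (n : ℕ) → (Fin n → X) → Y → Bool) (η : ℝ≥0∞) : Prop :=
  ∃ (Φ : (n : ℕ) → (Fin n → X) → Y) (N : ℕ), ∀ p ∈ P,
    p {ω | ∃ n, N ≤ n ∧ ErrAt ℓ p Φ ω n} ≤ η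

/-- `(𝒫, ℓ)` is e.a.s.-predictable: there is a predictor `Φ` such that for every `p ∈ 𝒫`,
with probability 1 only finitely many losses are incurred. -/
def EASPredictable (P : Set (Measure (ℕ → X)))
    (ℓ : Measure (ℕ → X) → (n : ℕ) → (Fin n → X) → Y → Bool) : Prop :=
  ∃ Φ : (n : ℕ) → (Fin n → X) → Y, ∀ p ∈ P,
    p {ω | {n | ErrAt ℓ p Φ ω n}.Finite} = 1

open Filter

theorem tsum_ne_top_of_eventually_le {f g : ℕ → ℝ≥0∞} (hf : ∀ k, f k ≠ ∞)
    (hg : ∑' k, g k ≠ ∞) (hfg : ∀ᶠ k in atTop, f k ≤ g k) : ∑' k, f k ≠ ∞ := by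
  obtain ⟨i, hi⟩ := eventually_atTop.1 hfg
  have htail : ∑' k, f (k + i) ≤ ∑' k, g k :=
    calc ∑' k, f (k + i) ≤ ∑' k, g (k + i) := ENNReal.tsum_le_tsum fun k => hi _ (by omega)
      _ ≤ ∑' k, g k := ENNReal.tsum_comp_le_tsum_of_injective (add_left_injective i) g
  rw [← ENNReal.summable.sum_add_tsum_nat_add' (k := i)]
  exact add_ne_top.2 ⟨sum_ne_top.2 fun k _ => hf k, ne_top_of_le_ne_top hg htail⟩

theorem tsum_inv_two_pow_ne_top : ∑' k : ℕ, (2 : ℝ≥0∞)⁻¹ ^ k ≠ ∞ := by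
  simp [ENNReal.tsum_geometric, ENNReal.one_sub_inv_two]

def lastReached (N : ℕ → ℕ) (n : ℕ) : ℕ := Nat.findGreatest (fun j => N j ≤ n) n

theorem eventually_le_lastReached (N : ℕ → ℕ) (k : ℕ) :
    ∀ᶠ n in atTop, k ≤ lastReached N n ∧ N (lastReached N n) ≤ n := by
  filter_upwards [eventually_ge_atTop (max k (N k))] with n hn
  obtain ⟨hkn, hNk⟩ := max_le_iff.1 hn
  exact ⟨Nat.le_findGreatest hkn hNk, Nat.findGreatest_spec (P := fun j => N j ≤ n) hkn hNk⟩

section Switching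

variable {ℓ : Measure (ℕ → X) → (n : ℕ) → (Fin n → X) → Y → Bool}
  {p : Measure (ℕ → X)} {Φ : ℕ → (n : ℕ) → (Fin n → X) → Y} {N J : ℕ → ℕ}

def switching (Φ : ℕ → (n : ℕ) → (Fin n → X) → Y) (J : ℕ → ℕ) : (n : ℕ) → (Fin n → X) → Y :=
  fun n => Φ (J n) n

theorem frequently_errAt_of_frequently_errAt_switching
    (hJ : ∀ k, ∀ᶠ n in atTop, k ≤ J n ∧ N (J n) ≤ n) {ω : ℕ → X}
    (h : ∃ᶠ n in atTop, ErrAt ℓ p (switching Φ J) ω n) :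
    ∃ᶠ k in atTop, ∃ n, N k ≤ n ∧ ErrAt ℓ p (Φ k) ω n := by
  refine frequently_atTop.2 fun m => ?_
  obtain ⟨n, ⟨hmJ, hN⟩, herr⟩ := ((hJ m).and_frequently h).exists
  exact ⟨J n, hmJ, n, hN, herr⟩

theorem ae_finite_errAt_switching (hJ : ∀ k, ∀ᶠ n in atTop, k ≤ J n ∧ N (J n) ≤ n)
    (hsum : ∑' k, p {ω | ∃ n, N k ≤ n ∧ ErrAt ℓ p (Φ k) ω n} ≠ ∞) :
    ∀ᵐ ω ∂p, {n | ErrAt ℓ p (switching Φ J) ω n}.Finite := by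
  filter_upwards [ae_finite_setOfPred_mem hsum] with ω hω
  rw [← Set.not_infinite, ← Nat.frequently_atTop_iff_infinite] at hω ⊢
  exact mt (frequently_errAt_of_frequently_errAt_switching hJ) hω

end Switching

/-- If `𝒫_1 ⊆ 𝒫_2 ⊆ ⋯` are nested classes such that each `(𝒫_i, ℓ)` is
`2⁻ⁱ`-predictable, then `𝒫 = ⋃_i 𝒫_i` is e.a.s.-predictable with loss `ℓ`. -/
theorem easPredictable_of_nested_geometric
    (Q : ℕ → Set (Measure (ℕ → X)))
    (hprob : ∀ i, ∀ p ∈ Q i, IsProbabilityMeasure p)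
    (ℓ : Measure (ℕ → X) → (n : ℕ) → (Fin n → X) → Y → Bool)
    (hmono : ∀ i, Q i ⊆ Q (i + 1))
    (hη : ∀ i, EtaPredictable (Q i) ℓ ((2 : ℝ≥0∞)⁻¹ ^ i)) :
    EASPredictable (⋃ i, Q i) ℓ := by
  choose Φ N hΦ using hη
  refine ⟨switching Φ (lastReached N), fun p hp => ?_⟩
  obtain ⟨i, hpi⟩ := mem_iUnion.1 hp
  have : IsProbabilityMeasure p := hprob i p hpi
  have hsum : ∑' k, p {ω | ∃ n, N k ≤ n ∧ ErrAt ℓ p (Φ k) ω n} ≠ ∞ :=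
    tsum_ne_top_of_eventually_le (fun _ => measure_ne_top _ _) tsum_inv_two_pow_ne_top
      (eventually_atTop.2 ⟨i, fun k hk => hΦ k p (monotone_nat_of_le_succ hmono hk hpi)⟩)
  have hfin := ae_finite_errAt_switching (eventually_le_lastReached N) hsum
  rw [← measure_univ (μ := p)]
  exact measure_congr (eventuallyEq_univ.2 hfin)

end Stmt4
end

section
/- Fix ε > 0 and a probability distribution μ on ℝ^d. In the game where nature fixes a measurable binary function h on ℝ^d, samples x_1, x_2, … are drawn i.i.d. from μ with labels h(x_n) revealed, and at each step the learner outputs a measurable function g_n on ℝ^d incurring loss 1{μ({x : h(x) ≠ g_n(x)}) > ε}, the class of ALL measurable binary functions on ℝ^d is e.a.s.-learnable. -/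
/-!
Measurable binary functions on `ℝ^d` are separable in `L¹(μ)`, so there is a sequence `g i` of
measurable classifiers approximating every `h` to within any error. Cut the sample into disjoint
consecutive blocks of lengths `K * 2 ^ j` and test on block `j` the candidate `g (c j)`, where
every candidate is scheduled on infinitely many blocks; a candidate passes when its empirical
error on its block is at most `3ε/4`. The learner stops as soon as some completed block has been
passed and from then on outputs the candidate of the earliest passed block.

By Chebyshev's inequality a candidate of error `> ε` passes block `j` with probability at most
`4 / (ε² K 2^j)`, and these bounds sum to `8 / (ε² K) < η`: this controls any loss after
stopping. A candidate of error `≤ ε/4` fails block `j` with probability at most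
`1 / (ε² K 2^j) → 0`, and it is tested on arbitrarily late blocks, so the learner stops a.s.
-/

open MeasureTheory Set ENNReal

namespace Stmt10

/-- `P` is the law of an i.i.d. sequence of samples from `p`: every finite-dimensional marginal
of `P` along the first `n` coordinates is the `n`-fold product of `p`. -/
def IsIidLaw {α : Type*} [MeasurableSpace α] (p : Measure α) (P : Measure (ℕ → α)) : Prop :=
  ∀ n : ℕ, P.map (fun ω (i : Fin n) => ω i.val) = Measure.pi (fun _ : Fin n => p)

open Finset ProbabilityTheory Filter Topology

theorem IsIidLaw.eq_infinitePi {α : Type*} [MeasurableSpace α] {p : Measure α}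
    [IsProbabilityMeasure p] {P : Measure (ℕ → α)} (hP : IsIidLaw p P) :
    P = Measure.infinitePi (fun _ : ℕ => p) := by
  classical
  refine Measure.eq_infinitePi _ fun s t ht => ?_
  obtain ⟨N, hN⟩ := s.exists_nat_subset_range
  have hbox : (s : Set ℕ).pi t = (fun ω (k : Fin N) => ω k) ⁻¹'
      univ.pi (fun k : Fin N => if (k : ℕ) ∈ s then t k else univ) := by
    ext ω
    simp only [Set.mem_pi, mem_coe, Set.mem_preimage, Set.mem_univ, forall_const]
    refine ⟨fun h k => ?_, fun h i hi => ?_⟩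
    · split_ifs with hk
      exacts [h k hk, mem_univ _]
    · simpa [hi] using h ⟨i, mem_range.1 (hN hi)⟩
  rw [hbox, ← Measure.map_apply (by fun_prop) (.univ_pi fun k => by split_ifs <;> simp [ht]),
    hP N, Measure.pi_pi]
  simp only [apply_ite, measure_univ]
  rw [Fin.prod_univ_eq_prod_range (fun i => if i ∈ s then p (t i) else 1), prod_ite_mem,
    Finset.inter_eq_right.2 hN]

theorem measure_le_abs_sum_indicator_sub_le {ι α : Type*} [MeasurableSpace α] (p : Measure α)
    [IsProbabilityMeasure p] {D : Set α} (hD : MeasurableSet D) (s : Finset ι) {a : ℝ}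
    (ha : 0 < a) :
    Measure.infinitePi (fun _ : ι => p)
        {ω | a ≤ |∑ i ∈ s, D.indicator 1 (ω i) - #s * p.real D|} ≤
      ENNReal.ofReal (#s / (4 * a ^ 2)) := by
  set P := Measure.infinitePi (fun _ : ι => p)
  set X : ι → (ι → α) → ℝ := fun i ω => D.indicator 1 (ω i)
  have hX_meas : ∀ i, Measurable (X i) :=
    fun i => (measurable_const.indicator hD).comp (measurable_pi_apply i)
  have hX_Icc : ∀ i ω, X i ω ∈ Icc (0 : ℝ) 1 := fun i ω => by
    by_cases h : ω i ∈ D <;> simp [X, h]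
  have hX_memLp : ∀ i, MemLp (X i) 2 P := fun i =>
    memLp_of_bounded (ae_of_all _ (hX_Icc i)) (hX_meas i).aestronglyMeasurable 2
  have hX_mean : ∀ i, P[X i] = p.real D := fun i => by
    rw [← integral_map (measurable_pi_apply i).aemeasurable
      (measurable_const.indicator hD).aestronglyMeasurable, Measure.infinitePi_map_eval,
      integral_indicator_one hD]
  have hmean : ∫ ω, ∑ i ∈ s, X i ω ∂P = #s * p.real D := by
    rw [integral_finsetSum s fun i _ => (hX_memLp i).integrable one_le_two]
    simp [hX_mean]
  have hvar : Var[∑ i ∈ s, X i; P] ≤ #s / 4 := by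
    rw [IndepFun.variance_sum (fun i _ => hX_memLp i)
        fun i _ j _ hij =>
        (iIndepFun_infinitePi fun _ => measurable_const.indicator hD).indepFun hij]
    calc ∑ i ∈ s, Var[X i; P] ≤ ∑ i ∈ s, ((1 - 0) / 2 : ℝ) ^ 2 := sum_le_sum fun i _ =>
          variance_le_sq_of_bounded (ae_of_all _ (hX_Icc i)) (hX_meas i).aemeasurable
      _ = #s / 4 := by rw [sum_const, nsmul_eq_mul]; ring
  calc P {ω | a ≤ |∑ i ∈ s, X i ω - #s * p.real D|}
      ≤ ENNReal.ofReal (Var[∑ i ∈ s, X i; P] / a ^ 2) := by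
        simpa [hmean] using
          meas_ge_le_variance_div_sq (memLp_finsetSum' s fun i _ => hX_memLp i) ha
    _ ≤ ENNReal.ofReal (#s / 4 / a ^ 2) := by gcongr
    _ = ENNReal.ofReal (#s / (4 * a ^ 2)) := by rw [div_div]

theorem measure_sum_indicator_le_le_of_lt {ι α : Type*} [MeasurableSpace α] {p : Measure α}
    [IsProbabilityMeasure p] {D : Set α} (hD : MeasurableSet D) {s : Finset ι} (hs : s.Nonempty)
    {ε : ℝ} (hε : 0 < ε) (hDε : ε < p.real D) :
    Measure.infinitePi (fun _ : ι => p) {ω | ∑ i ∈ s, D.indicator 1 (ω i) ≤ 3 / 4 * ε * #s} ≤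
      ENNReal.ofReal (4 / ε ^ 2 / #s) := by
  have hs' : (0 : ℝ) < #s := by simpa using hs.card_pos
  calc _ ≤ Measure.infinitePi (fun _ : ι => p)
        {ω | ε / 4 * #s ≤ |∑ i ∈ s, D.indicator 1 (ω i) - #s * p.real D|} := by
        refine measure_mono fun ω hω => ?_
        simp only [mem_ofPred_eq] at hω ⊢
        rw [abs_sub_comm]
        exact le_abs.2 (Or.inl (by nlinarith))
    _ ≤ ENNReal.ofReal (#s / (4 * (ε / 4 * #s) ^ 2)) :=
        measure_le_abs_sum_indicator_sub_le p hD s (by positivity)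
    _ = ENNReal.ofReal (4 / ε ^ 2 / #s) := by
        congr 1
        field_simp

theorem measure_lt_sum_indicator_le_of_le {ι α : Type*} [MeasurableSpace α] {p : Measure α}
    [IsProbabilityMeasure p] {D : Set α} (hD : MeasurableSet D) {s : Finset ι} (hs : s.Nonempty)
    {ε : ℝ} (hε : 0 < ε) (hDε : p.real D ≤ ε / 4) :
    Measure.infinitePi (fun _ : ι => p) {ω | 3 / 4 * ε * #s < ∑ i ∈ s, D.indicator 1 (ω i)} ≤
      ENNReal.ofReal (1 / ε ^ 2 / #s) := by
  have hs' : (0 : ℝ) < #s := by simpa using hs.card_pos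
  calc _ ≤ Measure.infinitePi (fun _ : ι => p)
        {ω | ε / 2 * #s ≤ |∑ i ∈ s, D.indicator 1 (ω i) - #s * p.real D|} := by
        refine measure_mono fun ω hω => ?_
        simp only [mem_ofPred_eq] at hω ⊢
        exact le_abs.2 (Or.inl (by nlinarith))
    _ ≤ ENNReal.ofReal (#s / (4 * (ε / 2 * #s) ^ 2)) :=
        measure_le_abs_sum_indicator_sub_le p hD s (by positivity)
    _ = ENNReal.ofReal (1 / ε ^ 2 / #s) := by
        congr 1
        field_simp
        ring

theorem exists_seq_measurable_bool_dense {α : Type*} [MeasurableSpace α] (μ : Measure α)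
    [IsFiniteMeasure μ] [IsSeparable μ] :
    ∃ g : ℕ → α → Bool, (∀ i, Measurable (g i)) ∧ ∀ h : α → Bool, Measurable h →
      ∀ δ : ℝ, 0 < δ → ∃ i, μ {y | h y ≠ g i y} < ENNReal.ofReal δ := by
  classical
  obtain ⟨𝒜, h𝒜_count, h𝒜⟩ := exists_countable_measureDense μ
  obtain ⟨A, rfl⟩ := h𝒜_count.exists_eq_range h𝒜.nonempty
  refine ⟨fun i y => decide (y ∈ A i), fun i => ?_, fun h hh δ hδ => ?_⟩
  · exact measurable_to_bool (by convert h𝒜.measurable _ ⟨i, rfl⟩; ext; simp)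
  · obtain ⟨_, ⟨i, rfl⟩, hi⟩ := h𝒜.approx _ (hh (measurableSet_singleton true))
      (measure_ne_top μ _) δ hδ
    refine ⟨i, lt_of_le_of_lt (measure_mono fun y hy => ?_) hi⟩
    cases hy' : h y <;> simp_all [Set.mem_symmDiff]

theorem tsum_ofReal_div_mul_two_pow {C : ℝ} (hC : 0 ≤ C) (K : ℕ) :
    ∑' j : ℕ, ENNReal.ofReal (C / ↑(K * 2 ^ j)) = 2 * ENNReal.ofReal (C / K) := by
  have hterm (j : ℕ) :
      ENNReal.ofReal (C / ↑(K * 2 ^ j)) = ENNReal.ofReal (C / K) * 2⁻¹ ^ j := by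
    rw [← ENNReal.ofReal_ofNat 2, ← ENNReal.ofReal_inv_of_pos two_pos,
      ← ENNReal.ofReal_pow (by norm_num), ← ENNReal.ofReal_mul (by positivity)]
    congr 1
    push_cast
    rw [inv_pow, ← div_eq_mul_inv, div_mul_eq_div_div]
  simp_rw [hterm, ENNReal.tsum_mul_left, ENNReal.tsum_geometric, ENNReal.one_sub_inv_two, inv_inv,
    mul_comm]

namespace BlockLearner

variable {α : Type*}

def blockStart (L : ℕ → ℕ) (j : ℕ) : ℕ := ∑ i ∈ range j, L i

def block (L : ℕ → ℕ) (j : ℕ) : Finset ℕ := Ico (blockStart L j) (blockStart L (j + 1))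

theorem card_block (L : ℕ → ℕ) (j : ℕ) : #(block L j) = L j := by
  simp [block, blockStart, sum_range_succ]

theorem block_subset_range {L : ℕ → ℕ} {j n : ℕ} (h : blockStart L (j + 1) ≤ n) :
    block L j ⊆ range n := fun _ hi => mem_range.2 ((mem_Ico.1 hi).2.trans_le h)

def mistakes {n : ℕ} (s : Finset ℕ) (f : α → Bool) (obs : Fin n → α × Bool) : ℝ :=
  ∑ i : Fin n, if (i : ℕ) ∈ s ∧ (obs i).2 ≠ f (obs i).1 then 1 else 0

theorem mistakes_labeled {n : ℕ} {s : Finset ℕ} (hs : s ⊆ range n) (f h : α → Bool)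
    (x : ℕ → α) :
    mistakes s f (fun i : Fin n => (x i, h (x i))) =
      ∑ i ∈ s, {y | h y ≠ f y}.indicator 1 (x i) := by
  rw [mistakes,
    Fin.sum_univ_eq_sum_range (fun i => if i ∈ s ∧ h (x i) ≠ f (x i) then 1 else 0)]
  simp_rw [ite_and]
  rw [sum_ite_mem, Finset.inter_eq_right.2 hs]
  simp [Set.indicator_apply]

variable (g : ℕ → α → Bool) (c L : ℕ → ℕ) (ε : ℝ)

def Passes {n : ℕ} (obs : Fin n → α × Bool) (j : ℕ) : Prop :=
  blockStart L (j + 1) ≤ n ∧ mistakes (block L j) (g (c j)) obs ≤ 3 / 4 * ε * L j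

open Classical in
noncomputable def stopRule (n : ℕ) (obs : Fin n → α × Bool) : Bool :=
  decide (∃ j, Passes g c L ε obs j)

open Classical in
noncomputable def predictor (n : ℕ) (obs : Fin n → α × Bool) : α → Bool :=
  if h : ∃ j, Passes g c L ε obs j then g (c (Nat.find h)) else g 0

variable {g c L ε}

theorem passes_labeled_iff {n j : ℕ} (h : α → Bool) (x : ℕ → α) :
    Passes g c L ε (fun i : Fin n => (x i, h (x i))) j ↔ blockStart L (j + 1) ≤ n ∧
      ∑ i ∈ block L j, {y | h y ≠ g (c j) y}.indicator 1 (x i) ≤ 3 / 4 * ε * L j :=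
  and_congr_right fun hj => by rw [mistakes_labeled (block_subset_range hj)]

theorem stopRule_eq_true_iff {n : ℕ} {obs : Fin n → α × Bool} :
    stopRule g c L ε n obs = true ↔ ∃ j, Passes g c L ε obs j := by
  simp [stopRule]

theorem exists_passes_predictor_eq {n : ℕ} {obs : Fin n → α × Bool}
    (h : stopRule g c L ε n obs = true) :
    ∃ j, Passes g c L ε obs j ∧ predictor g c L ε n obs = g (c j) := by
  classical
  have h' := stopRule_eq_true_iff.1 h
  exact ⟨Nat.find h', Nat.find_spec h', by simp [predictor, h']⟩

theorem measurable_predictor [MeasurableSpace α] (hg : ∀ i, Measurable (g i)) (n : ℕ)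
    (obs : Fin n → α × Bool) :
    Measurable (predictor g c L ε n obs) := by
  unfold predictor
  split_ifs <;> exact hg _

variable [MeasurableSpace α] {p : Measure α} [IsProbabilityMeasure p]

theorem measure_exists_stopRule_eq_one (hε : 0 < ε) (hg : ∀ i, Measurable (g i)) {h : α → Bool}
    (hh : Measurable h) (hgood : ∃ i, p {y | h y ≠ g i y} < ENNReal.ofReal (ε / 4))
    (hc : ∀ i M, ∃ j, M ≤ j ∧ c j = i) (hL : Tendsto L atTop atTop) :
    Measure.infinitePi (fun _ : ℕ => p)
      {x | ∃ n, stopRule g c L ε n (fun i : Fin n => (x i, h (x i))) = true} = 1 := by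
  obtain ⟨i, hi⟩ := hgood
  choose j hjM hcj using hc i
  set D := {y | h y ≠ g i y}
  have hD : MeasurableSet D := (measurableSet_eq_fun hh (hg i)).compl
  have hDε : p.real D ≤ ε / 4 := ENNReal.toReal_le_of_le_ofReal (by positivity) hi.le
  have hLj : Tendsto (fun M => L (j M)) atTop atTop :=
    hL.comp (tendsto_atTop_mono hjM tendsto_id)
  have hfail : ∀ M, 0 < L (j M) → Measure.infinitePi (fun _ : ℕ => p)
      {x | ∃ n, stopRule g c L ε n (fun i : Fin n => (x i, h (x i))) = true}ᶜ ≤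
        ENNReal.ofReal (1 / ε ^ 2 / L (j M)) := by
    intro M hM
    have hne : (block L (j M)).Nonempty := by rw [← card_pos, card_block]; exact hM
    calc _ ≤ Measure.infinitePi (fun _ : ℕ => p)
          {x | 3 / 4 * ε * #(block L (j M)) < ∑ k ∈ block L (j M), D.indicator 1 (x k)} := by
          refine measure_mono fun x hx => ?_
          simp only [mem_compl_iff, mem_ofPred_eq, stopRule_eq_true_iff, not_exists] at hx
          have hfails := hx (blockStart L (j M + 1)) (j M)
          rw [passes_labeled_iff, not_and] at hfails
          simpa [card_block, hcj, D] using hfails le_rfl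
      _ ≤ _ := by
          simpa [card_block] using measure_lt_sum_indicator_le_of_le hD hne hε hDε
  have hlim : Tendsto (fun M => ENNReal.ofReal (1 / ε ^ 2 / L (j M))) atTop (𝓝 0) := by
    simpa using ENNReal.tendsto_ofReal ((tendsto_const_div_atTop_nhds_zero_nat _).comp hLj)
  have hzero := le_antisymm (ge_of_tendsto hlim ((hLj.eventually_gt_atTop 0).mono hfail)) bot_le
  exact (measure_congr (ae_eq_univ.2 hzero)).trans measure_univ

theorem measure_loss_after_stopRule_le (hε : 0 < ε) (hg : ∀ i, Measurable (g i)) {h : α → Bool}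
    (hh : Measurable h) (hL : ∀ j, 0 < L j) :
    Measure.infinitePi (fun _ : ℕ => p)
      {x | ∃ n, stopRule g c L ε n (fun i : Fin n => (x i, h (x i))) = true ∧ ∃ k, n ≤ k ∧
        ENNReal.ofReal ε <
          p {y | h y ≠ predictor g c L ε k (fun i : Fin k => (x i, h (x i))) y}} ≤
      ∑' j, ENNReal.ofReal (4 / ε ^ 2 / L j) := by
  set D : ℕ → Set α := fun j => {y | h y ≠ g (c j) y}
  have hD : ∀ j, MeasurableSet (D j) := fun j => (measurableSet_eq_fun hh (hg _)).compl
  calc _ ≤ Measure.infinitePi (fun _ : ℕ => p) (⋃ j, {x | ENNReal.ofReal ε < p (D j) ∧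
          ∑ k ∈ block L j, (D j).indicator 1 (x k) ≤ 3 / 4 * ε * L j}) := measure_mono ?_
    _ ≤ ∑' j, _ := measure_iUnion_le _
    _ ≤ _ := ENNReal.tsum_le_tsum fun j => ?_
  · rintro x ⟨n, hn, k, hnk, hloss⟩
    obtain ⟨j₀, hj₀⟩ := stopRule_eq_true_iff.1 hn
    rw [passes_labeled_iff] at hj₀
    have hk : stopRule g c L ε k (fun i : Fin k => (x i, h (x i))) = true :=
      stopRule_eq_true_iff.2 ⟨j₀, (passes_labeled_iff h x).2 ⟨hj₀.1.trans hnk, hj₀.2⟩⟩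
    obtain ⟨j, hj, hpred⟩ := exists_passes_predictor_eq hk
    rw [hpred] at hloss
    exact mem_iUnion.2 ⟨j, hloss, ((passes_labeled_iff h x).1 hj).2⟩
  · by_cases hbad : ENNReal.ofReal ε < p (D j)
    · have hne : (block L j).Nonempty := by rw [← card_pos, card_block]; exact hL j
      have hDε : ε < p.real (D j) :=
        (ENNReal.ofReal_lt_iff_lt_toReal hε.le (measure_ne_top _ _)).1 hbad
      calc _ ≤ Measure.infinitePi (fun _ : ℕ => p)
            {x | ∑ k ∈ block L j, (D j).indicator 1 (x k) ≤ 3 / 4 * ε * #(block L j)} :=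
            measure_mono fun x hx => by rw [card_block]; exact hx.2
        _ ≤ _ := by
            simpa [card_block] using measure_sum_indicator_le_le_of_lt (hD j) hne hε hDε
    · simp [hbad]

end BlockLearner

open BlockLearner in
/-- Fix `ε > 0` and a distribution `μ` on `ℝ^d`. In the game where the learner,
after seeing the labeled samples `(x_1, h(x_1)), …, (x_n, h(x_n))` (with `x_i` i.i.d. `∼ μ`),
outputs a measurable function `g_n` and incurs loss `1{μ{x : h(x) ≠ g_n(x)} > ε}`, the class of
ALL measurable binary functions on `ℝ^d` is e.a.s.-learnable: for every `η > 0` there are a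
strategy `G` (outputting measurable functions) and a stopping rule `τ` such that for every
measurable `h`, the stopping rule fires eventually a.s., and the probability that any loss is
incurred at or after the first firing time is less than `η`. -/
theorem pac_eas_learnable {d : ℕ}
    (μ : Measure (Fin d → ℝ)) [IsProbabilityMeasure μ]
    (Pμ : Measure (ℕ → Fin d → ℝ)) (hPμ : IsIidLaw μ Pμ)
    (ε : ℝ) (hε : 0 < ε) :
    ∀ η : ℝ≥0∞, 0 < η →
      ∃ (G : (n : ℕ) → (Fin n → (Fin d → ℝ) × Bool) → (Fin d → ℝ) → Bool)
        (τ : (n : ℕ) → (Fin n → (Fin d → ℝ) × Bool) → Bool),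
        (∀ n obs, Measurable (G n obs)) ∧
        ∀ h : (Fin d → ℝ) → Bool, Measurable h →
          Pμ {x | ∃ n, τ n (fun i => (x i.val, h (x i.val))) = true} = 1 ∧
          Pμ {x | ∃ n, (τ n (fun i => (x i.val, h (x i.val))) = true ∧
                ∀ m < n, τ m (fun i => (x i.val, h (x i.val))) = false) ∧
              ∃ k, n ≤ k ∧
                ENNReal.ofReal ε <
                  μ {y | h y ≠ G k (fun i => (x i.val, h (x i.val))) y}} < η := by
  intro η hη
  obtain rfl := hPμ.eq_infinitePi
  obtain ⟨g, hg, hdense⟩ := exists_seq_measurable_bool_dense μ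
  obtain ⟨K, hK, hKη⟩ : ∃ K : ℕ, 0 < K ∧ 2 * ENNReal.ofReal (4 / ε ^ 2 / K) < η := by
    have : Tendsto (fun K : ℕ => 2 * ENNReal.ofReal (4 / ε ^ 2 / K)) atTop (𝓝 0) := by
      simpa using ENNReal.Tendsto.const_mul
        (ENNReal.tendsto_ofReal (tendsto_const_div_atTop_nhds_zero_nat _)) (.inr ofNat_ne_top)
    exact ((eventually_gt_atTop 0).and (this.eventually (gt_mem_nhds hη))).exists
  set c : ℕ → ℕ := fun j => j.unpair.1
  set L : ℕ → ℕ := fun j => K * 2 ^ j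
  refine ⟨predictor g c L ε, stopRule g c L ε, measurable_predictor hg, fun h hh => ⟨?_, ?_⟩⟩
  · refine measure_exists_stopRule_eq_one hε hg hh (hdense h hh _ (by positivity))
      (fun i M => ⟨Nat.pair i M, Nat.right_le_pair i M, by simp [c]⟩)
      (tendsto_atTop_mono (fun j => ?_) tendsto_id)
    exact Nat.lt_two_pow_self.le.trans (Nat.le_mul_of_pos_left _ hK)
  · calc _ ≤ _ := measure_mono ?_
      _ ≤ _ := measure_loss_after_stopRule_le (c := c) (L := L) hε hg hh fun _ => by positivity
      _ = 2 * ENNReal.ofReal (4 / ε ^ 2 / K) := tsum_ofReal_div_mul_two_pow (by positivity) K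
      _ < η := hKη
    rintro x ⟨n, ⟨hn, -⟩, hk⟩
    exact ⟨n, hn, hk⟩

end Stmt10
end

section
/- Insurance problem, predictability: Let 𝒫 be a class of probability distributions over ℕ, sampled i.i.d., with insurance loss ℓ(p, x_1^n, y) = 1{x_n > y} for predictions y ∈ ℕ. Then (𝒫, ℓ) is e.a.s.-predictable if and only if there are countably many tight classes 𝒫_1, 𝒫_2, … of distributions with 𝒫 = ⋃_{i=1}^∞ 𝒫_i. -/
open MeasureTheory Set ENNReal

namespace Stmt13

/-- `P` is the law of an i.i.d. sequence of samples from `p`: every finite-dimensional marginal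
of `P` along the first `n` coordinates is the `n`-fold product of `p`. -/
def IsIidLaw {α : Type*} [MeasurableSpace α] (p : Measure α) (P : Measure (ℕ → α)) : Prop :=
  ∀ n : ℕ, P.map (fun ω (i : Fin n) => ω i.val) = Measure.pi (fun _ : Fin n => p)

/-- The insurance loss: having observed `X_1^n`, the predictor proposes `Φ n (X_1^n) ∈ ℕ` and
incurs a loss iff the next sample exceeds it, i.e. `X_{n+1} > Φ(X_1^n)`. -/
def InsErrAt (Φ : (n : ℕ) → (Fin n → ℕ) → ℕ) (ω : ℕ → ℕ) (n : ℕ) : Prop :=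
  Φ n (fun i => ω i.val) < ω n

/-- A class `Q` of distributions on `ℕ` is tight: for every `ε > 0` there is `N` with
`p{x : x ≥ N} ≤ ε` uniformly over `p ∈ Q`. -/
def TightClass (Q : Set (Measure ℕ)) : Prop :=
  ∀ ε : ℝ≥0∞, 0 < ε → ∃ N : ℕ, ∀ p ∈ Q, p {x | N ≤ x} ≤ ε

/-!
If `𝒫 = ⋃ 𝒫ᵢ` with `𝒫ᵢ` tight, pick thresholds `Nᵢ(n)` with `p{x ≥ Nᵢ(n)} ≤ 2⁻ⁿ` on `𝒫ᵢ` and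
predict `maxᵢ≤ₙ Nᵢ(n)` at time `n`. For `p ∈ 𝒫ᵢ` an error at time `n ≥ i` forces `Xₙ ≥ Nᵢ(n)`,
an event of probability at most `2⁻ⁿ`, so Borel–Cantelli applies.

Conversely, given a predictor `Φ` with finitely many errors almost surely, every `p ∈ 𝒫` gives
probability `> 1/2` to some event "no error from time `m` on and the first `m` samples are `< c`".
On that event each later sample is at most a prediction made on an already bounded history, so
all samples up to time `m + k` lie below a deterministic bound `B(k)`, whence `p{x < B(k)}ᵏ > 1/2`.
Hence the class of such `p`, for fixed `(m, c)`, is tight.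
-/

theorem measure_eq_one_of_ae_mem {α : Type*} [MeasurableSpace α] {μ : Measure α}
    [IsProbabilityMeasure μ] {s : Set α} (h : ∀ᵐ x ∂μ, x ∈ s) : μ s = 1 :=
  (measure_congr (ae_eq_univ.mpr (ae_iff.mp h))).trans measure_univ

theorem exists_lt_measure_of_lt_measure_iUnion {α : Type*} [MeasurableSpace α] {μ : Measure α}
    {s : ℕ → Set α} (hs : Monotone s) {δ : ℝ≥0∞} (h : δ < μ (⋃ i, s i)) : ∃ i, δ < μ (s i) :=
  lt_iSup_iff.mp (hs.measure_iUnion ▸ h)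

theorem measurable_prefix {α : Type*} [MeasurableSpace α] (n : ℕ) :
    Measurable fun (ω : ℕ → α) (i : Fin n) => ω i :=
  measurable_pi_lambda _ fun _ => measurable_pi_apply _

namespace IsIidLaw

variable {α : Type*} [MeasurableSpace α] {p : Measure α} {Pr : Measure (ℕ → α)}

theorem measure_prefix_preimage (h : IsIidLaw p Pr) (n : ℕ) {T : Set (Fin n → α)}
    (hT : MeasurableSet T) :
    Pr ((fun ω (i : Fin n) => ω i) ⁻¹' T) = Measure.pi (fun _ => p) T := by
  rw [← Measure.map_apply (measurable_prefix n) hT, h n]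

theorem isProbabilityMeasure (h : IsIidLaw p Pr) : IsProbabilityMeasure Pr :=
  ⟨by simpa [Measure.pi_of_empty] using h.measure_prefix_preimage 0 MeasurableSet.univ⟩

theorem measure_forall_lt_mem [SigmaFinite p] (h : IsIidLaw p Pr) (n : ℕ) {s : Set α}
    (hs : MeasurableSet s) :
    Pr {ω | ∀ i < n, ω i ∈ s} = p s ^ n := by
  have hpre : {ω : ℕ → α | ∀ i < n, ω i ∈ s} =
      (fun ω (i : Fin n) => ω i) ⁻¹' univ.pi fun _ => s := by
    ext ω
    simp [Fin.forall_iff]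
  rw [hpre, h.measure_prefix_preimage n (.univ_pi fun _ => hs), Measure.pi_pi]
  simp

theorem measure_mem [IsProbabilityMeasure p] (h : IsIidLaw p Pr) (n : ℕ) {s : Set α}
    (hs : MeasurableSet s) : Pr {ω | ω n ∈ s} = p s := by
  have hpre : {ω : ℕ → α | ω n ∈ s} =
      (fun ω (i : Fin (n + 1)) => ω i) ⁻¹' (Function.eval (Fin.last n) ⁻¹' s) := rfl
  rw [hpre, h.measure_prefix_preimage _ (measurable_pi_apply _ hs),
    (measurePreserving_eval _ _).measure_preimage hs.nullMeasurableSet]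

theorem ae_finite_setOf_mem [IsProbabilityMeasure p] (h : IsIidLaw p Pr) {s : ℕ → Set α}
    (hs : ∀ n, MeasurableSet (s n)) (hsum : ∑' n, p (s n) ≠ ∞) :
    ∀ᵐ ω ∂Pr, {n | ω n ∈ s n}.Finite :=
  ae_finite_setOfPred_mem (μ := Pr) (s := fun n => {ω : ℕ → α | ω n ∈ s n})
    (by simpa [h.measure_mem _ (hs _)])

end IsIidLaw

theorem TightClass.exists_geometric_thresholds {Q : Set (Measure ℕ)} (hQ : TightClass Q) :
    ∃ N : ℕ → ℕ, ∀ k, ∀ p ∈ Q, p {x | N k ≤ x} ≤ 2⁻¹ ^ k := by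
  choose N hN using fun k : ℕ => hQ (2⁻¹ ^ k) (ENNReal.pow_pos (by simp) k)
  exact ⟨N, hN⟩

theorem tightClass_of_le_pow {Q : Set (Measure ℕ)} (hQ : ∀ p ∈ Q, IsProbabilityMeasure p)
    {δ : ℝ≥0∞} (hδ : 0 < δ) (N : ℕ → ℕ) (h : ∀ k, ∀ p ∈ Q, δ ≤ p (Iio (N k)) ^ k) :
    TightClass Q := by
  intro ε hε
  obtain ⟨k, hk⟩ : ∃ k, (1 - ε) ^ k < δ :=
    ((ENNReal.tendsto_pow_atTop_nhds_zero_of_lt_one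
      (ENNReal.sub_lt_self one_ne_top one_ne_zero hε.ne')).eventually_lt_const hδ).exists
  refine ⟨N k, fun p hp => ?_⟩
  have := hQ p hp
  have hlt : 1 - ε ≤ p (Iio (N k)) :=
    le_of_not_ge fun hle => (h k p hp).not_gt ((pow_le_pow_left' hle k).trans_lt hk)
  calc p {x | N k ≤ x} = 1 - p (Iio (N k)) := by
        rw [← prob_compl_eq_one_sub measurableSet_Iio, compl_Iio]; rfl
    _ ≤ ε := tsub_le_iff_left.mpr (tsub_le_iff_right.mp hlt)

theorem exists_predictor_of_tight (Q : ℕ → Set (Measure ℕ)) (hQ : ∀ i, TightClass (Q i)) :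
    ∃ Φ : (n : ℕ) → (Fin n → ℕ) → ℕ, ∀ i, ∀ p ∈ Q i, ∀ [IsProbabilityMeasure p]
      (Pr : Measure (ℕ → ℕ)), IsIidLaw p Pr → Pr {ω | {n | InsErrAt Φ ω n}.Finite} = 1 := by
  choose N hN using fun i => (hQ i).exists_geometric_thresholds
  refine ⟨fun n _ => (Finset.range (n + 1)).sup fun i => N i n, fun i p hp _ Pr hPr => ?_⟩
  have := hPr.isProbabilityMeasure
  have hsum : ∑' n, p {x | N i n ≤ x} ≠ ∞ :=
    ne_top_of_le_ne_top (by simp [ENNReal.tsum_geometric, ENNReal.one_sub_inv_two])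
      (ENNReal.tsum_le_tsum fun n => hN i n p hp)
  refine measure_eq_one_of_ae_mem <|
    (hPr.ae_finite_setOf_mem (fun _ => measurableSet_Ici) hsum).mono fun ω hω => ?_
  refine (hω.union (finite_Iio i)).subset fun n (hn : _ < ω n) => ?_
  rcases lt_or_ge n i with hni | hin
  · exact Or.inr hni
  · exact Or.inl ((Finset.le_sup (f := fun i => N i n) (Finset.mem_range.mpr (by omega))).trans
      hn.le)

section ErrorFreeTrajectories

variable (Φ : (n : ℕ) → (Fin n → ℕ) → ℕ)

def maxPrediction (n b : ℕ) : ℕ :=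
  Finset.univ.sup fun x : Fin n → Fin b => Φ n fun i => x i

theorem le_maxPrediction {n b : ℕ} {x : Fin n → ℕ} (hx : ∀ i, x i < b) :
    Φ n x ≤ maxPrediction Φ n b :=
  Finset.le_sup (f := fun x : Fin n → Fin b => Φ n fun i => x i)
    (Finset.mem_univ fun i => ⟨x i, hx i⟩)

def noErrorFrom (m : ℕ) : Set (ℕ → ℕ) :=
  {ω | ∀ n, m ≤ n → ¬ InsErrAt Φ ω n}

def errorFreeFrom (m c : ℕ) : Set (ℕ → ℕ) :=
  noErrorFrom Φ m ∩ {ω | ∀ i < m, ω i < c}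

def trajectoryBound (m c : ℕ) : ℕ → ℕ
  | 0 => c
  | t + 1 => max (trajectoryBound m c t) (maxPrediction Φ (m + t) (trajectoryBound m c t) + 1)

theorem monotone_noErrorFrom : Monotone (noErrorFrom Φ) :=
  fun _ _ hmm' _ hω n hn => hω n (hmm'.trans hn)

theorem monotone_errorFreeFrom (m : ℕ) : Monotone (errorFreeFrom Φ m) :=
  fun _ _ hcc' _ hω => ⟨hω.1, fun i hi => (hω.2 i hi).trans_le hcc'⟩

theorem iUnion_errorFreeFrom (m : ℕ) : ⋃ c, errorFreeFrom Φ m c = noErrorFrom Φ m := by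
  refine subset_antisymm (iUnion_subset fun _ _ hω => hω.1) fun ω hω => ?_
  exact mem_iUnion.mpr ⟨(Finset.range m).sup ω + 1, hω,
    fun i hi => Nat.lt_succ_of_le (Finset.le_sup (Finset.mem_range.mpr hi))⟩

theorem setOf_finite_subset_iUnion_noErrorFrom :
    {ω | {n | InsErrAt Φ ω n}.Finite} ⊆ ⋃ m, noErrorFrom Φ m := fun ω hω => by
  obtain ⟨b, hb⟩ := hω.bddAbove
  exact mem_iUnion.mpr ⟨b + 1, fun n hn herr => by have := hb herr; omega⟩

theorem exists_lt_measure_errorFreeFrom {Pr : Measure (ℕ → ℕ)} {δ : ℝ≥0∞}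
    (hδ : δ < Pr {ω | {n | InsErrAt Φ ω n}.Finite}) : ∃ m c, δ < Pr (errorFreeFrom Φ m c) := by
  obtain ⟨m, hm⟩ := exists_lt_measure_of_lt_measure_iUnion (monotone_noErrorFrom Φ)
    (hδ.trans_le (measure_mono (setOf_finite_subset_iUnion_noErrorFrom Φ)))
  obtain ⟨c, hc⟩ := exists_lt_measure_of_lt_measure_iUnion (monotone_errorFreeFrom Φ m)
    (by rwa [iUnion_errorFreeFrom])
  exact ⟨m, c, hc⟩

theorem lt_trajectoryBound {m c : ℕ} {ω : ℕ → ℕ} (hω : ω ∈ errorFreeFrom Φ m c) :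
    ∀ t, ∀ i < m + t, ω i < trajectoryBound Φ m c t
  | 0, i, hi => hω.2 i hi
  | t + 1, i, hi => by
    rcases Nat.lt_or_ge i (m + t) with hlt | hge
    · exact (lt_trajectoryBound hω t i hlt).trans_le (le_max_left _ _)
    · obtain rfl : i = m + t := by omega
      calc ω (m + t) ≤ Φ (m + t) fun j => ω j := not_lt.mp (hω.1 (m + t) (Nat.le_add_right m t))
        _ ≤ maxPrediction Φ (m + t) (trajectoryBound Φ m c t) :=
          le_maxPrediction Φ fun j => lt_trajectoryBound hω t j j.isLt
        _ < maxPrediction Φ (m + t) (trajectoryBound Φ m c t) + 1 := Nat.lt_succ_self _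
        _ ≤ trajectoryBound Φ m c (t + 1) := le_max_right _ _

theorem measure_errorFreeFrom_le {p : Measure ℕ} [IsProbabilityMeasure p]
    {Pr : Measure (ℕ → ℕ)} (hPr : IsIidLaw p Pr) (m c k : ℕ) :
    Pr (errorFreeFrom Φ m c) ≤ p (Iio (trajectoryBound Φ m c k)) ^ k :=
  calc Pr (errorFreeFrom Φ m c)
      ≤ Pr {ω | ∀ i < m + k, ω i ∈ Iio (trajectoryBound Φ m c k)} :=
        measure_mono fun _ hω => lt_trajectoryBound Φ hω k
    _ = p (Iio (trajectoryBound Φ m c k)) ^ (m + k) :=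
        hPr.measure_forall_lt_mem _ measurableSet_Iio
    _ ≤ p (Iio (trajectoryBound Φ m c k)) ^ k :=
        pow_le_pow_right_of_le_one' prob_le_one (Nat.le_add_left k m)

end ErrorFreeTrajectories

/-- The insurance problem `(𝒫, ℓ)` with i.i.d. sampling is e.a.s.-predictable
iff `𝒫` is a countable union of tight classes. -/
theorem insurance_eas_iff_countable_union_tight
    (Proc : Measure ℕ → Measure (ℕ → ℕ))
    (hProc : ∀ p : Measure ℕ, IsProbabilityMeasure p → IsIidLaw p (Proc p))
    (P : Set (Measure ℕ)) (hP : ∀ p ∈ P, IsProbabilityMeasure p) :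
    (∃ Φ : (n : ℕ) → (Fin n → ℕ) → ℕ,
      ∀ p ∈ P, Proc p {ω | {n | InsErrAt Φ ω n}.Finite} = 1) ↔
      ∃ Pi : ℕ → Set (Measure ℕ), (⋃ i, Pi i) = P ∧ ∀ i, TightClass (Pi i) := by
  constructor
  · rintro ⟨Φ, hΦ⟩
    let Q : ℕ × ℕ → Set (Measure ℕ) := fun mc =>
      {p ∈ P | 2⁻¹ < Proc p (errorFreeFrom Φ mc.1 mc.2)}
    refine ⟨fun n => Q n.unpair, ?_, fun n => ?_⟩
    · rw [Nat.surjective_unpair.iUnion_comp Q]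
      refine subset_antisymm (iUnion_subset fun _ _ hp => hp.1) fun p hp => ?_
      obtain ⟨m, c, h⟩ := exists_lt_measure_errorFreeFrom Φ (δ := 2⁻¹)
        (by rw [hΦ p hp]; exact ENNReal.inv_lt_one.mpr one_lt_two)
      exact mem_iUnion.mpr ⟨(m, c), hp, h⟩
    · refine tightClass_of_le_pow (fun p hp => hP p hp.1) (δ := 2⁻¹) (by simp)
        (trajectoryBound Φ n.unpair.1 n.unpair.2) fun k p hp => ?_
      have := hP p hp.1
      exact hp.2.le.trans (measure_errorFreeFrom_le Φ (hProc p this) _ _ k)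
  · rintro ⟨Q, rfl, hQ⟩
    obtain ⟨Φ, hΦ⟩ := exists_predictor_of_tight Q hQ
    refine ⟨Φ, fun p hp => ?_⟩
    obtain ⟨i, hi⟩ := mem_iUnion.mp hp
    have := hP p hp
    exact hΦ i p hi _ (hProc p this)

end Stmt13
end

section
/- Let H_0 and H_1 be collections of probability distributions over ℝ^d that are F_σ-separable under the Kolmogorov–Smirnov distance. Then, under i.i.d. sampling and the classification loss (the learner predicts at each step whether the underlying distribution lies in H_0 or H_1, incurring loss 1 iff wrong), the class H_0 ∪ H_1 is e.a.s.-predictable. -/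
open MeasureTheory Set ENNReal

/-!
A Glivenko–Cantelli theorem with a distribution-free rate drives the predictor. On the grid of
the `k / (j + 1)`-quantiles of the coordinates of `p`, every lower orthant is sandwiched between a
grid orthant and that orthant plus `d` slabs of `p`-mass at most `1 / (j + 1)`, so a uniform
`1 / (j + 1)` control of the empirical frequencies of these `(j + 1)^d + d (j + 1)` sets bounds
the KS-distance from the empirical measure to `p` by `r_j = (2d + 1) / (j + 1)`. Chebyshev, a
union bound and Borel–Cantelli along suitable sample sizes `N_j` make this hold almost surely for
all large `j`.

At time `n` the predictor takes the largest `N_j ≤ n` and answers `H₁` iff at some level `k` the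
`r_j`-ball around the empirical measure of the first `N_j` samples meets `B k` but misses `A k`.
If `p ∈ A k₀`, closedness of `B k₀` keeps it at KS-distance `ε > 0` from `B k₀ ⊇ B k`
(`k ≤ k₀`), while for `k ≥ k₀` the ball contains `p ∈ A k`; so once `2 r_j < ε` the answer is
`H₀`. The case `p ∈ B k₁` is symmetric.
-/

namespace Stmt15

/-- `P` is the law of an i.i.d. sequence of samples from `p`: every finite-dimensional marginal
of `P` along the first `n` coordinates is the `n`-fold product of `p`. -/
def IsIidLaw {α : Type*} [MeasurableSpace α] (p : Measure α) (P : Measure (ℕ → α)) : Prop :=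
  ∀ n : ℕ, P.map (fun ω (i : Fin n) => ω i.val) = Measure.pi (fun _ : Fin n => p)

/-- The CDF of a distribution `p` on `ℝ^d`: `F_p(x) = p(∏_i (−∞, x_i])`. -/
noncomputable def cdf {d : ℕ} (p : Measure (Fin d → ℝ)) (x : Fin d → ℝ) : ℝ :=
  (p {y | ∀ i, y i ≤ x i}).toReal

/-- The Kolmogorov–Smirnov distance `sup_x |F_p(x) − F_q(x)|`. -/
noncomputable def ksDist {d : ℕ} (p q : Measure (Fin d → ℝ)) : ℝ :=
  ⨆ x : Fin d → ℝ, |cdf p x - cdf q x|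

/-- A collection `C` of distributions on `ℝ^d` is closed in KS-distance (within the space of all
probability distributions): every probability measure that is approximated arbitrarily well in
KS-distance by members of `C` belongs to `C`. -/
def KSClosed {d : ℕ} (C : Set (Measure (Fin d → ℝ))) : Prop :=
  ∀ p : Measure (Fin d → ℝ), IsProbabilityMeasure p →
    (∀ ε : ℝ, 0 < ε → ∃ q ∈ C, ksDist p q < ε) → p ∈ C

/-- The classification error: the Bool-valued predictor `Φ` (with `false` standing for `H₀` and
`true` for `H₁`), fed the first `n` samples of `ω`, disagrees with the index of the hypothesis
class containing `p`. -/
def ClsErrAt {d : ℕ} (H₀ : Set (Measure (Fin d → ℝ))) (p : Measure (Fin d → ℝ))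
    (Φ : (n : ℕ) → (Fin n → (Fin d → ℝ)) → Bool) (ω : ℕ → (Fin d → ℝ)) (n : ℕ) : Prop :=
  (Φ n (fun i => ω i.val) = true) ↔ p ∈ H₀

open Filter Topology

lemma ksDist_le_of_forall {d : ℕ} {μ ν : Measure (Fin d → ℝ)} {c : ℝ}
    (h : ∀ x, |cdf μ x - cdf ν x| ≤ c) : ksDist μ ν ≤ c :=
  ciSup_le h

section KSDistance

variable {d : ℕ} (μ ν ρ : Measure (Fin d → ℝ))

lemma cdf_eq_measureReal (x : Fin d → ℝ) : cdf μ x = μ.real (Iic x) := rfl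

lemma ksDist_comm : ksDist μ ν = ksDist ν μ := by
  simp only [ksDist, abs_sub_comm]

variable [IsFiniteMeasure μ] [IsFiniteMeasure ν] [IsFiniteMeasure ρ]

lemma abs_cdf_sub_le_ksDist (x : Fin d → ℝ) : |cdf μ x - cdf ν x| ≤ ksDist μ ν := by
  refine le_ciSup (f := fun x => |cdf μ x - cdf ν x|) ⟨μ.real univ + ν.real univ, ?_⟩ x
  rintro _ ⟨y, rfl⟩
  simp only [cdf_eq_measureReal]
  have := measureReal_mono (μ := μ) (subset_univ (Iic y))
  have := measureReal_mono (μ := ν) (subset_univ (Iic y))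
  rw [abs_le]
  constructor <;> linarith [measureReal_nonneg (μ := μ) (s := Iic y),
    measureReal_nonneg (μ := ν) (s := Iic y)]

lemma ksDist_triangle : ksDist μ ρ ≤ ksDist μ ν + ksDist ν ρ :=
  ksDist_le_of_forall fun x => (abs_sub_le _ (cdf ν x) _).trans
    (add_le_add (abs_cdf_sub_le_ksDist μ ν x) (abs_cdf_sub_le_ksDist ν ρ x))

end KSDistance

lemma KSClosed.exists_pos_le_ksDist {d : ℕ} {C : Set (Measure (Fin d → ℝ))} (hC : KSClosed C)
    {p : Measure (Fin d → ℝ)} [IsProbabilityMeasure p] (hp : p ∉ C) :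
    ∃ ε > 0, ∀ q ∈ C, ε ≤ ksDist p q := by
  by_contra! h
  exact hp (hC p ‹_› h)

section Empirical

variable {α : Type*} [MeasurableSpace α] {n : ℕ}

-- For `n = 0` the factor `(0 : ℝ≥0∞)⁻¹ = ⊤` multiplies an empty sum: the zero measure.
noncomputable def empiricalMeasure (s : Fin n → α) : Measure α :=
  (n : ℝ≥0∞)⁻¹ • ∑ i, Measure.dirac (s i)

variable [MeasurableSingletonClass α]

lemma empiricalMeasure_apply (s : Fin n → α) (S : Set α) :
    empiricalMeasure s S = (n : ℝ≥0∞)⁻¹ * ∑ i, S.indicator 1 (s i) := by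
  simp [empiricalMeasure]

instance (s : Fin n → α) : IsFiniteMeasure (empiricalMeasure s) :=
  ⟨by simpa [empiricalMeasure_apply] using (ENNReal.inv_mul_le_one _).trans_lt one_lt_top⟩

lemma empiricalMeasure_real_apply (s : Fin n → α) (S : Set α) :
    (empiricalMeasure s).real S = (∑ i, S.indicator (1 : α → ℝ) (s i)) / n := by
  classical
  have htoReal (i) : (S.indicator (1 : α → ℝ≥0∞) (s i)).toReal = S.indicator 1 (s i) := by
    rw [Set.indicator_apply, Set.indicator_apply]; split_ifs <;> simp
  rw [measureReal_def, empiricalMeasure_apply, ENNReal.toReal_mul, ENNReal.toReal_inv,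
    ENNReal.toReal_natCast, ENNReal.toReal_sum fun i _ => by
      rw [Set.indicator_apply]; split_ifs <;> simp, div_eq_inv_mul]
  simp only [htoReal]

end Empirical

lemma indicator_one_comp_eval_mem_Icc {α : Type*} {n : ℕ} (S : Set α) (i : Fin n)
    (s : Fin n → α) : (S.indicator (1 : α → ℝ) ∘ Function.eval i) s ∈ Icc 0 1 := by
  by_cases h : s i ∈ S <;> simp [h]

section ProductSample

open ProbabilityTheory

variable {α : Type*} [MeasurableSpace α] {n : ℕ} (p : Measure α) [IsProbabilityMeasure p]
  {S : Set α}

lemma memLp_indicator_one_comp_eval (hS : MeasurableSet S) (i : Fin n) :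
    MemLp (S.indicator (1 : α → ℝ) ∘ Function.eval i) 2 (Measure.pi fun _ : Fin n => p) :=
  memLp_of_bounded (ae_of_all _ (indicator_one_comp_eval_mem_Icc S i))
    ((measurable_const.indicator hS).comp (measurable_pi_apply i)).aestronglyMeasurable 2

variable [MeasurableSingletonClass α]

lemma empiricalMeasure_real_eq_smul_sum (S : Set α) :
    (fun s : Fin n → α => (empiricalMeasure s).real S) =
      (n : ℝ)⁻¹ • ∑ i : Fin n, S.indicator 1 ∘ Function.eval i := by
  ext s; simp [empiricalMeasure_real_apply, div_eq_inv_mul]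

lemma memLp_empiricalMeasure_real (hS : MeasurableSet S) :
    MemLp (fun s : Fin n → α => (empiricalMeasure s).real S) 2 (Measure.pi fun _ => p) := by
  rw [empiricalMeasure_real_eq_smul_sum]
  exact (memLp_finsetSum' _ fun i _ => memLp_indicator_one_comp_eval p hS i).const_smul (n : ℝ)⁻¹

lemma integral_empiricalMeasure_real (hS : MeasurableSet S) (hn : 0 < n) :
    ∫ s, (empiricalMeasure s).real S ∂(Measure.pi fun _ : Fin n => p) = p.real S := by
  have hcoord (i : Fin n) :
      ∫ s, S.indicator 1 (s i) ∂(Measure.pi fun _ : Fin n => p) = p.real S := by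
    rw [← integral_indicator_one hS]
    exact integral_comp_eval (measurable_const.indicator hS).aestronglyMeasurable
  simp_rw [empiricalMeasure_real_apply]
  rw [integral_div, integral_finsetSum (f := fun i (s : Fin n → α) => S.indicator 1 (s i)) _
    fun i _ => (memLp_indicator_one_comp_eval p hS i).integrable one_le_two]
  simp [hcoord, hn.ne']

lemma variance_empiricalMeasure_real_le (hS : MeasurableSet S) :
    variance (fun s : Fin n → α => (empiricalMeasure s).real S) (Measure.pi fun _ => p)
      ≤ 1 / (4 * n) := by
  set μ := Measure.pi fun _ : Fin n => p
  have hindep : iIndepFun (fun i => S.indicator (1 : α → ℝ) ∘ Function.eval i) μ :=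
    iIndepFun_pi fun _ => (measurable_const.indicator hS).aemeasurable
  rw [empiricalMeasure_real_eq_smul_sum, variance_smul, IndepFun.variance_sum
    (fun i _ => memLp_indicator_one_comp_eval p hS i) fun i _ j _ hij => hindep.indepFun hij]
  calc (n : ℝ)⁻¹ ^ 2 * ∑ i, variance (S.indicator 1 ∘ Function.eval i) μ
      ≤ (n : ℝ)⁻¹ ^ 2 * ∑ _i : Fin n, ((1 - 0) / 2 : ℝ) ^ 2 := by
        gcongr with i
        exact variance_le_sq_of_bounded (ae_of_all _ (indicator_one_comp_eval_mem_Icc S i))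
          ((measurable_const.indicator hS).comp (measurable_pi_apply i)).aemeasurable
    _ = 1 / (4 * (n : ℝ)) := by simp; field_simp; norm_num

lemma measure_le_abs_empiricalMeasure_real_sub_le (hS : MeasurableSet S) (hn : 0 < n) {u : ℝ}
    (hu : 0 < u) :
    Measure.pi (fun _ : Fin n => p) {s | u ≤ |(empiricalMeasure s).real S - p.real S|}
      ≤ ENNReal.ofReal (1 / (4 * n * u ^ 2)) := by
  calc _ ≤ ENNReal.ofReal (variance (fun s => (empiricalMeasure s).real S)
        (Measure.pi fun _ : Fin n => p) / u ^ 2) := by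
        simpa only [integral_empiricalMeasure_real p hS hn] using
          meas_ge_le_variance_div_sq (memLp_empiricalMeasure_real (n := n) p hS) hu
    _ ≤ ENNReal.ofReal (1 / (4 * n * u ^ 2)) := by
        rw [← div_div]
        exact ENNReal.ofReal_le_ofReal (by gcongr; exact variance_empiricalMeasure_real_le p hS)

end ProductSample

namespace IsIidLaw

variable {α : Type*} [MeasurableSpace α] {p : Measure α} {P : Measure (ℕ → α)}

lemma isProbabilityMeasure [IsProbabilityMeasure p] (hP : IsIidLaw p P) :
    IsProbabilityMeasure P := by
  have h := congrArg (· univ) (hP 0)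
  rw [Measure.map_apply (by fun_prop) MeasurableSet.univ] at h
  exact ⟨by simpa using h⟩

lemma measure_prefix_le (hP : IsIidLaw p P) (n : ℕ) (E : Set (Fin n → α)) :
    P {ω | (fun i : Fin n => ω i) ∈ E} ≤ Measure.pi (fun _ => p) E :=
  hP n ▸ Measure.le_map_apply (f := fun (ω : ℕ → α) (i : Fin n) => ω i)
    (measurable_pi_lambda _ fun _ => measurable_pi_apply _).aemeasurable E

lemma measure_exists_le_abs_empiricalMeasure_real_sub [MeasurableSingletonClass α]
    [IsProbabilityMeasure p] (hP : IsIidLaw p P) {ι : Type*} [Fintype ι] {T : ι → Set α}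
    (hT : ∀ k, MeasurableSet (T k)) {n : ℕ} (hn : 0 < n) {u : ℝ} (hu : 0 < u) :
    P {ω | ∃ k, u ≤ |(empiricalMeasure fun i : Fin n => ω i).real (T k) - p.real (T k)|}
      ≤ ENNReal.ofReal (Fintype.card ι / (4 * n * u ^ 2)) := by
  rw [ofPred_exists]
  refine (measure_iUnion_fintype_le _ _).trans ?_
  calc ∑ k, P {ω | u ≤ |(empiricalMeasure fun i : Fin n => ω i).real (T k) - p.real (T k)|}
      ≤ ∑ _k : ι, ENNReal.ofReal (1 / (4 * n * u ^ 2)) := Finset.sum_le_sum fun k _ =>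
        (hP.measure_prefix_le n _).trans
          (measure_le_abs_empiricalMeasure_real_sub_le p (hT k) hn hu)
    _ = ENNReal.ofReal (Fintype.card ι / (4 * n * u ^ 2)) := by
        rw [Finset.sum_const, Finset.card_univ, nsmul_eq_mul, ← ENNReal.ofReal_natCast,
          ← ENNReal.ofReal_mul (Nat.cast_nonneg _), mul_one_div]

end IsIidLaw

open ProbabilityTheory (tendsto_cdf_atTop tendsto_cdf_atBot monotone_cdf measure_cdf ofReal_cdf) in
lemma exists_measure_Iio_le_le_measure_Iic (ν : Measure ℝ) [IsProbabilityMeasure ν] {a : ℝ≥0∞}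
    (ha₀ : 0 < a) (ha₁ : a < 1) : ∃ c, ν (Iio c) ≤ a ∧ a ≤ ν (Iic c) := by
  have ha : a ≠ ⊤ := ha₁.ne_top
  set F := ProbabilityTheory.cdf ν
  set S := {t | a.toReal ≤ F t}
  have hne : S.Nonempty := ((tendsto_cdf_atTop ν).eventually
    (eventually_ge_nhds (by simpa using (ENNReal.toReal_lt_toReal ha one_ne_top).2 ha₁))).exists
  obtain ⟨t₀, ht₀⟩ := eventually_atBot.1 ((tendsto_cdf_atBot ν).eventually
    (eventually_lt_nhds (ENNReal.toReal_pos ha₀.ne' ha)))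
  have hbdd : BddBelow S := ⟨t₀, fun t ht => le_of_not_ge fun h => (ht₀ t h).not_ge ht⟩
  refine ⟨sInf S, ?_, ?_⟩
  · have hleft : Function.leftLim F (sInf S) ≤ a.toReal := by
      rw [(monotone_cdf ν).leftLim_eq_sSup]
      refine csSup_le (nonempty_Iio.image _) ?_
      rintro _ ⟨t, ht, rfl⟩
      have ht' : t ∉ S := notMem_of_lt_csInf ht hbdd
      exact (not_le.1 ht').le
    rw [← measure_cdf ν, F.measure_Iio (tendsto_cdf_atBot ν), sub_zero]
    exact ENNReal.ofReal_le_of_le_toReal hleft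
  · have : a.toReal ≤ F (sInf S) := by
      refine ge_of_tendsto ((F.right_continuous (sInf S)).mono Ioi_subset_Ici_self)
        (eventually_nhdsWithin_of_forall fun t ht => ?_)
      obtain ⟨s, hs, hst⟩ := exists_lt_of_csInf_lt hne ht
      exact hs.trans (monotone_cdf ν hst.le)
    rw [← ofReal_cdf]
    exact (ENNReal.le_ofReal_iff_toReal_le ha (ProbabilityTheory.cdf_nonneg ν _)).2 this

lemma measure_diff_le_tsub_of_subset_or_subset {α : Type*} [MeasurableSpace α] {μ : Measure α}
    [IsFiniteMeasure μ] {s t : Set α} (ht : MeasurableSet t) (h : t ⊆ s ∨ s ⊆ t) :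
    μ (s \ t) ≤ μ s - μ t := by
  rcases h with h | h
  · exact (measure_sdiff h ht.nullMeasurableSet (measure_ne_top μ t)).le
  · simp [sdiff_eq_empty.2 h]

section QuantileGrid

variable (ν : Measure ℝ) (m : ℕ)

def IsQuantileGrid (c : ℕ → ℝ) : Prop :=
  ∀ k, 0 < k → k < m → ν (Iio (c k)) ≤ (k : ℝ≥0∞) / m ∧ (k : ℝ≥0∞) / m ≤ ν (Iic (c k))

lemma exists_isQuantileGrid [IsProbabilityMeasure ν] : ∃ c, IsQuantileGrid ν m c := by
  have hq (k : ℕ) : ∃ c : ℝ, 0 < k → k < m →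
      ν (Iio c) ≤ (k : ℝ≥0∞) / m ∧ (k : ℝ≥0∞) / m ≤ ν (Iic c) := by
    by_cases hk : 0 < k ∧ k < m
    · have hm : (m : ℝ≥0∞) ≠ 0 := by exact_mod_cast (hk.1.trans hk.2).ne'
      obtain ⟨c, hc⟩ := exists_measure_Iio_le_le_measure_Iic ν (a := k / m)
        (ENNReal.div_pos (by exact_mod_cast hk.1.ne') (natCast_ne_top m))
        ((ENNReal.div_lt_iff (Or.inl hm) (Or.inl (natCast_ne_top m))).2 (by simpa using hk.2))
      exact ⟨c, fun _ _ => hc⟩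
    · exact ⟨0, fun h₁ h₂ => (hk ⟨h₁, h₂⟩).elim⟩
  choose c hc using hq
  exact ⟨c, hc⟩

def lowerGridSet (c : ℕ → ℝ) (k : ℕ) : Set ℝ := if k = 0 then ∅ else Iic (c k)

def upperGridSet (c : ℕ → ℝ) (k : ℕ) : Set ℝ := if k < m then Iio (c k) else univ

variable {ν m} {c : ℕ → ℝ}

lemma measurableSet_lowerGridSet (k : ℕ) : MeasurableSet (lowerGridSet c k) := by
  unfold lowerGridSet; split_ifs <;> measurability

lemma measurableSet_upperGridSet (k : ℕ) : MeasurableSet (upperGridSet m c k) := by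
  unfold upperGridSet; split_ifs <;> measurability

lemma IsQuantileGrid.le_measure_lowerGridSet (hc : IsQuantileGrid ν m c) {k : ℕ} (hk : k < m) :
    (k : ℝ≥0∞) / m ≤ ν (lowerGridSet c k) := by
  unfold lowerGridSet
  split_ifs with h
  · simp [h]
  · exact (hc k (Nat.pos_of_ne_zero h) hk).2

lemma IsQuantileGrid.measure_upperGridSet_le [IsProbabilityMeasure ν]
    (hc : IsQuantileGrid ν m c) {k : ℕ} (hk : 0 < k) (hkm : k ≤ m) :
    ν (upperGridSet m c k) ≤ (k : ℝ≥0∞) / m := by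
  unfold upperGridSet
  split_ifs with h
  · exact (hc k hk h).1
  · simp [show k = m by omega, ENNReal.div_self (by simp; omega : (m : ℝ≥0∞) ≠ 0)]

lemma lowerGridSet_subset_or_subset (k : ℕ) :
    lowerGridSet c k ⊆ upperGridSet m c (k + 1) ∨ upperGridSet m c (k + 1) ⊆ lowerGridSet c k := by
  unfold lowerGridSet upperGridSet
  split_ifs
  · exact Or.inl (empty_subset _)
  · exact Or.inl (empty_subset _)
  · exact (lt_or_ge (c k) (c (k + 1))).imp Iic_subset_Iio.2
      fun h => Iio_subset_Iic_self.trans (Iic_subset_Iic.2 h)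
  · exact Or.inl (subset_univ _)

lemma IsQuantileGrid.measure_upperGridSet_sdiff_le [IsProbabilityMeasure ν]
    (hc : IsQuantileGrid ν m c) {k : ℕ} (hk : k < m) :
    ν (upperGridSet m c (k + 1) \ lowerGridSet c k) ≤ (m : ℝ≥0∞)⁻¹ := by
  calc ν (upperGridSet m c (k + 1) \ lowerGridSet c k)
      ≤ ν (upperGridSet m c (k + 1)) - ν (lowerGridSet c k) :=
        measure_diff_le_tsub_of_subset_or_subset (measurableSet_lowerGridSet k)
          (lowerGridSet_subset_or_subset k)
    _ ≤ ((k + 1 : ℕ) : ℝ≥0∞) / m - (k : ℝ≥0∞) / m :=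
        tsub_le_tsub (hc.measure_upperGridSet_le k.succ_pos hk) (hc.le_measure_lowerGridSet hk)
    _ = (m : ℝ≥0∞)⁻¹ := by
        rw [← ENNReal.sub_div fun _ _ => by simp; omega, Nat.cast_succ,
          ENNReal.add_sub_cancel_left (natCast_ne_top k), one_div]

lemma exists_lowerGridSet_subset_Iic (hm : 0 < m) (t : ℝ) :
    ∃ k < m, lowerGridSet c k ⊆ Iic t ∧ Iic t ⊆ lowerGridSet c k ∪ upperGridSet m c (k + 1) := by
  set P : ℕ → Prop := fun k => k = 0 ∨ c k ≤ t
  set k := Nat.findGreatest P (m - 1)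
  have hPk : P k := Nat.findGreatest_spec (Nat.zero_le _) (Or.inl rfl)
  refine ⟨k, (Nat.findGreatest_le (m - 1)).trans_lt (by omega), ?_, fun y hy => Or.inr ?_⟩
  · unfold lowerGridSet
    split_ifs with h
    · exact empty_subset _
    · exact Iic_subset_Iic.2 (hPk.resolve_left h)
  · unfold upperGridSet
    split_ifs with h
    · have : ¬ P (k + 1) := Nat.findGreatest_is_greatest k.lt_succ_self (by omega)
      simp only [P, not_or, not_le] at this
      exact lt_of_le_of_lt hy this.2
    · exact mem_univ y

end QuantileGrid

lemma exists_Iic_subset_union (ν : Measure ℝ) [IsProbabilityMeasure ν] {m : ℕ} (hm : 0 < m) :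
    ∃ ℓ g : Fin m → Set ℝ, (∀ k, MeasurableSet (ℓ k)) ∧ (∀ k, MeasurableSet (g k)) ∧
      (∀ k, ν (g k) ≤ (m : ℝ≥0∞)⁻¹) ∧ ∀ t, ∃ k, ℓ k ⊆ Iic t ∧ Iic t ⊆ ℓ k ∪ g k := by
  obtain ⟨c, hc⟩ := exists_isQuantileGrid ν m
  refine ⟨fun k => lowerGridSet c k, fun k => upperGridSet m c (k + 1) \ lowerGridSet c k,
    fun k => measurableSet_lowerGridSet k,
    fun k => (measurableSet_upperGridSet _).diff (measurableSet_lowerGridSet k),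
    fun k => hc.measure_upperGridSet_sdiff_le k.2, fun t => ?_⟩
  obtain ⟨k, hkm, hsub, hcov⟩ := exists_lowerGridSet_subset_Iic (c := c) hm t
  exact ⟨⟨k, hkm⟩, hsub, by rwa [union_sdiff_self]⟩

lemma abs_measureReal_sub_le_of_subset_union {α ι : Type*} [MeasurableSpace α] [Fintype ι]
    {μ ν : Measure α} [IsFiniteMeasure μ] [IsFiniteMeasure ν] {L T : Set α} {U : ι → Set α}
    {u δ : ℝ} (hLT : L ⊆ T) (hTL : T ⊆ L ∪ ⋃ i, U i) (hL : |μ.real L - ν.real L| ≤ u)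
    (hU : ∀ i, |μ.real (U i) - ν.real (U i)| ≤ u) (hνU : ∀ i, ν.real (U i) ≤ δ) :
    |μ.real T - ν.real T| ≤ (Fintype.card ι + 1) * u + Fintype.card ι * δ := by
  have cover {ρ : Measure α} [IsFiniteMeasure ρ] : ρ.real T ≤ ρ.real L + ∑ i, ρ.real (U i) :=
    (measureReal_mono hTL).trans
      ((measureReal_union_le _ _).trans (add_le_add_right (measureReal_iUnion_fintype_le _) _))
  have hμU : ∑ i, μ.real (U i) ≤ Fintype.card ι * δ + Fintype.card ι * u := by
    simpa using Finset.sum_le_card_nsmul Finset.univ _ _ fun i _ =>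
      show μ.real (U i) ≤ δ + u by linarith [(abs_le.1 (hU i)).2, hνU i]
  have hνU' : ∑ i, ν.real (U i) ≤ Fintype.card ι * δ := by
    simpa using Finset.sum_le_card_nsmul Finset.univ _ _ fun i _ => hνU i
  have := measureReal_mono (μ := μ) hLT
  have := measureReal_mono (μ := ν) hLT
  have := abs_le.1 hL
  have : 0 ≤ (Fintype.card ι : ℝ) * u := mul_nonneg (Nat.cast_nonneg _) ((abs_nonneg _).trans hL)
  rw [abs_le]
  constructor <;> linarith [cover (ρ := μ), cover (ρ := ν)]

abbrev GridIndex (d m : ℕ) : Type := (Fin d → Fin m) ⊕ (Fin d × Fin m)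

lemma exists_ksDist_le_of_abs_measureReal_sub_le {d : ℕ} (p : Measure (Fin d → ℝ))
    [IsProbabilityMeasure p] {m : ℕ} (hm : 0 < m) :
    ∃ T : GridIndex d m → Set (Fin d → ℝ), (∀ k, MeasurableSet (T k)) ∧
      ∀ (μ : Measure (Fin d → ℝ)) [IsFiniteMeasure μ] (u : ℝ),
        (∀ k, |μ.real (T k) - p.real (T k)| ≤ u) → ksDist μ p ≤ (d + 1) * u + d / m := by
  have (i : Fin d) : IsProbabilityMeasure (p.map (· i)) :=
    Measure.isProbabilityMeasure_map (measurable_pi_apply i).aemeasurable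
  choose ℓ g hℓ hg hgp hcover using fun i => exists_Iic_subset_union (p.map (· i)) hm
  refine ⟨Sum.elim (fun κ => univ.pi fun i => ℓ i (κ i)) (fun ik => (· ik.1) ⁻¹' g ik.1 ik.2),
    ?_, fun μ _ u hu => ksDist_le_of_forall fun x => ?_⟩
  · rintro (κ | ⟨i, k⟩)
    · exact MeasurableSet.univ_pi fun i => hℓ i (κ i)
    · exact measurable_pi_apply i (hg i k)
  choose κ hκ using fun i => hcover i (x i)
  have hsub : univ.pi (fun i => ℓ i (κ i)) ⊆ Iic x := by
    rw [← pi_univ_Iic]; exact pi_mono fun i _ => (hκ i).1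
  have hcov : Iic x ⊆ univ.pi (fun i => ℓ i (κ i)) ∪ ⋃ i, (· i) ⁻¹' g i (κ i) := by
    intro y hy
    by_cases hyL : y ∈ univ.pi fun i => ℓ i (κ i)
    · exact Or.inl hyL
    · obtain ⟨i, hi⟩ : ∃ i, y i ∉ ℓ i (κ i) := by simpa using hyL
      exact Or.inr (mem_iUnion.2 ⟨i, ((hκ i).2 (hy i)).resolve_left hi⟩)
  have hgp' (i : Fin d) : p.real ((· i) ⁻¹' g i (κ i)) ≤ 1 / m := by
    rw [measureReal_def, ← Measure.map_apply (measurable_pi_apply i) (hg i _), one_div,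
      ← ENNReal.toReal_natCast, ← ENNReal.toReal_inv]
    exact ENNReal.toReal_mono (by simpa using hm.ne') (hgp i _)
  simpa [cdf_eq_measureReal, div_eq_mul_inv] using
    abs_measureReal_sub_le_of_subset_union hsub hcov (hu (Sum.inl κ))
      (fun i => hu (Sum.inr (i, κ i))) hgp'

section Checkpoints

variable {d : ℕ}

/-- At checkpoint `j` the test sets of the quantile grid with `j + 1` cells per axis are compared
with a precision of `1 / (j + 1)`; the sample size is chosen so that Chebyshev's inequality and
a union bound over the grid leave a failure probability of at most `2⁻ʲ`. -/
def sampleSize (d j : ℕ) : ℕ :=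
  2 ^ j * (j + 1) ^ 2 * Fintype.card (GridIndex d (j + 1))

noncomputable def ksRadius (d j : ℕ) : ℝ := (2 * d + 1) / (j + 1)

lemma sampleSize_pos (d j : ℕ) : 0 < sampleSize d j := by
  have := Fintype.card_pos (α := GridIndex d (j + 1))
  unfold sampleSize; positivity

lemma tendsto_ksRadius (d : ℕ) : Tendsto (ksRadius d) atTop (𝓝 0) := by
  refine ((tendsto_const_div_atTop_nhds_zero_nat (2 * d + 1 : ℝ)).comp
    (tendsto_add_atTop_nat 1)).congr fun j => ?_
  simp [ksRadius]

lemma card_grid_div_le (j : ℕ) :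
    (Fintype.card (GridIndex d (j + 1)) : ℝ) / (4 * sampleSize d j * (1 / (j + 1 : ℝ)) ^ 2)
      ≤ (1 / 2) ^ j := by
  have := Fintype.card_pos (α := GridIndex d (j + 1))
  simp only [sampleSize]
  push_cast
  field_simp
  rw [mul_assoc, ← mul_pow]
  norm_num

theorem IsIidLaw.ae_eventually_ksDist_empiricalMeasure_le {p : Measure (Fin d → ℝ)}
    [IsProbabilityMeasure p] {P : Measure (ℕ → (Fin d → ℝ))} (hP : IsIidLaw p P) :
    ∀ᵐ ω ∂P, ∀ᶠ j in atTop,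
      ksDist (empiricalMeasure fun i : Fin (sampleSize d j) => ω i) p ≤ ksRadius d j := by
  choose T hT hks using fun j : ℕ => exists_ksDist_le_of_abs_measureReal_sub_le p j.succ_pos
  set bad : ℕ → Set (ℕ → (Fin d → ℝ)) := fun j => {ω | ∃ k, 1 / (j + 1 : ℝ) ≤
    |(empiricalMeasure fun i : Fin (sampleSize d j) => ω i).real (T j k) - p.real (T j k)|}
  have hbad (j : ℕ) : P (bad j) ≤ ENNReal.ofReal ((1 / 2) ^ j) :=
    (hP.measure_exists_le_abs_empiricalMeasure_real_sub (hT j) (sampleSize_pos d j)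
      (by positivity)).trans (ENNReal.ofReal_le_ofReal (card_grid_div_le j))
  have hsum : ∑' j, P (bad j) ≠ ∞ := by
    refine ne_top_of_le_ne_top ?_ (ENNReal.tsum_le_tsum hbad)
    rw [← ENNReal.ofReal_tsum_of_nonneg (fun j => by positivity) summable_geometric_two]
    exact ENNReal.ofReal_ne_top
  filter_upwards [ae_eventually_notMem hsum] with ω hω
  filter_upwards [hω] with j hj
  simp only [bad, mem_ofPred_eq, not_exists, not_le] at hj
  calc ksDist _ p ≤ (d + 1) * (1 / (j + 1 : ℝ)) + d / (j + 1 : ℕ) :=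
        hks j _ _ fun k => (hj k).le
    _ = ksRadius d j := by rw [ksRadius]; push_cast; ring

end Checkpoints

section Predictor

variable {d : ℕ} {A B : ℕ → Set (Measure (Fin d → ℝ))}

def ChoosesSecond (A B : ℕ → Set (Measure (Fin d → ℝ))) (μ : Measure (Fin d → ℝ)) (r : ℝ) :
    Prop :=
  ∃ k, (∃ q ∈ B k, ksDist μ q ≤ r) ∧ ∀ q ∈ A k, r < ksDist μ q

lemma not_choosesSecond_of_mem (hBc : ∀ k, KSClosed (B k)) (hA : Monotone A) (hB : Monotone B)
    (hBfin : ∀ k, ∀ q ∈ B k, IsFiniteMeasure q) {p : Measure (Fin d → ℝ)}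
    [IsProbabilityMeasure p] {k₀ : ℕ} (hpA : p ∈ A k₀) (hpB : p ∉ B k₀) :
    ∃ ε > 0, ∀ (μ : Measure (Fin d → ℝ)) [IsFiniteMeasure μ] (r : ℝ),
      ksDist μ p ≤ r → 2 * r < ε → ¬ ChoosesSecond A B μ r := by
  obtain ⟨ε, hε, hsep⟩ := (hBc k₀).exists_pos_le_ksDist hpB
  refine ⟨ε, hε, fun μ _ r hμp hr ⟨k, ⟨q, hqB, hμq⟩, hAk⟩ => ?_⟩
  rcases le_total k₀ k with hk | hk
  · exact (hAk p (hA hk hpA)).not_ge hμp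
  · have := hBfin k₀ q (hB hk hqB)
    have := (hsep q (hB hk hqB)).trans (ksDist_triangle p μ q)
    rw [ksDist_comm p μ] at this
    linarith

lemma choosesSecond_of_mem (hAc : ∀ k, KSClosed (A k)) (hAfin : ∀ k, ∀ q ∈ A k, IsFiniteMeasure q)
    {p : Measure (Fin d → ℝ)} [IsProbabilityMeasure p] {k₁ : ℕ} (hpB : p ∈ B k₁)
    (hpA : p ∉ A k₁) :
    ∃ ε > 0, ∀ (μ : Measure (Fin d → ℝ)) [IsFiniteMeasure μ] (r : ℝ),
      ksDist μ p ≤ r → 2 * r < ε → ChoosesSecond A B μ r := by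
  obtain ⟨ε, hε, hsep⟩ := (hAc k₁).exists_pos_le_ksDist hpA
  refine ⟨ε, hε, fun μ _ r hμp hr => ⟨k₁, ⟨p, hpB, hμp⟩, fun q hq => ?_⟩⟩
  have := hAfin k₁ q hq
  have := (hsep q hq).trans (ksDist_triangle p μ q)
  rw [ksDist_comm p μ] at this
  linarith

lemma exists_pos_choosesSecond_iff (hAc : ∀ k, KSClosed (A k)) (hBc : ∀ k, KSClosed (B k))
    (hA : Monotone A) (hB : Monotone B) (hdisj : (⋃ k, A k) ∩ ⋃ k, B k = ∅)
    (hfin : ∀ q ∈ (⋃ k, A k) ∪ ⋃ k, B k, IsFiniteMeasure q) {p : Measure (Fin d → ℝ)}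
    [IsProbabilityMeasure p] (hp : p ∈ (⋃ k, A k) ∪ ⋃ k, B k) :
    ∃ ε > 0, ∀ (μ : Measure (Fin d → ℝ)) [IsFiniteMeasure μ] (r : ℝ),
      ksDist μ p ≤ r → 2 * r < ε → (ChoosesSecond A B μ r ↔ p ∉ ⋃ k, A k) := by
  rcases hp with hp | hp <;> obtain ⟨k, hk⟩ := mem_iUnion.1 hp
  · obtain ⟨ε, hε, h⟩ := not_choosesSecond_of_mem hBc hA hB
      (fun k q hq => hfin q (.inr (mem_iUnion_of_mem k hq))) hk
      fun hkB => hdisj.subset ⟨hp, mem_iUnion_of_mem k hkB⟩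
    exact ⟨ε, hε, fun μ _ r h₁ h₂ => iff_of_false (h μ r h₁ h₂) (not_not.2 hp)⟩
  · have hpA : p ∉ ⋃ k, A k := fun hpA => hdisj.subset ⟨hpA, hp⟩
    obtain ⟨ε, hε, h⟩ := choosesSecond_of_mem hAc
      (fun k q hq => hfin q (.inl (mem_iUnion_of_mem k hq))) hk
      fun hkA => hpA (mem_iUnion_of_mem k hkA)
    exact ⟨ε, hε, fun μ _ r h₁ h₂ => iff_of_true (h μ r h₁ h₂) hpA⟩

noncomputable def checkpoint (d n : ℕ) : ℕ := Nat.findGreatest (fun j => sampleSize d j ≤ n) n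

lemma tendsto_checkpoint (d : ℕ) : Tendsto (checkpoint d) atTop atTop :=
  tendsto_atTop_atTop.2 fun j => ⟨max j (sampleSize d j), fun _ hn =>
    Nat.le_findGreatest (le_of_max_le_left hn) (le_of_max_le_right hn)⟩

lemma eventually_sampleSize_checkpoint_le (d : ℕ) :
    ∀ᶠ n in atTop, sampleSize d (checkpoint d n) ≤ n :=
  eventually_atTop.2 ⟨sampleSize d 0, fun n hn =>
    Nat.findGreatest_spec (P := fun j => sampleSize d j ≤ n) (Nat.zero_le _) hn⟩

open Classical in
noncomputable def predictor (A B : ℕ → Set (Measure (Fin d → ℝ))) (n : ℕ)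
    (s : Fin n → (Fin d → ℝ)) : Bool :=
  if h : sampleSize d (checkpoint d n) ≤ n then
    decide (ChoosesSecond A B (empiricalMeasure fun i => s (Fin.castLE h i))
      (ksRadius d (checkpoint d n)))
  else false

lemma eventually_predictor_eq {p : Measure (Fin d → ℝ)} {Q : Prop} {ε : ℝ} (hε : 0 < ε)
    (hQ : ∀ (μ : Measure (Fin d → ℝ)) [IsFiniteMeasure μ] (r : ℝ),
      ksDist μ p ≤ r → 2 * r < ε → (ChoosesSecond A B μ r ↔ Q))
    {ω : ℕ → (Fin d → ℝ)} (hω : ∀ᶠ j in atTop,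
      ksDist (empiricalMeasure fun i : Fin (sampleSize d j) => ω i) p ≤ ksRadius d j) :
    ∀ᶠ n in atTop, (predictor A B n (fun i => ω i) = true ↔ Q) := by
  classical
  have hj : ∀ᶠ j in atTop, (ChoosesSecond A B
      (empiricalMeasure fun i : Fin (sampleSize d j) => ω i) (ksRadius d j) ↔ Q) := by
    filter_upwards [hω, (tendsto_ksRadius d).eventually (eventually_lt_nhds (half_pos hε))]
      with j hj hr
    exact hQ _ _ hj (by linarith)
  filter_upwards [(tendsto_checkpoint d).eventually hj, eventually_sampleSize_checkpoint_le d]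
    with n hn hle
  rw [predictor, dif_pos hle, decide_eq_true_iff]
  exact hn

end Predictor

/-- If `H₀` and `H₁` are disjoint collections of probability distributions on
`ℝ^d` that are `F_σ`-separable under the KS-distance, then under i.i.d. sampling and the
classification loss, `H₀ ∪ H₁` is e.a.s.-predictable. -/
theorem classification_eas_of_fSigmaSeparable {d : ℕ}
    (Proc : Measure (Fin d → ℝ) → Measure (ℕ → (Fin d → ℝ)))
    (hProc : ∀ p : Measure (Fin d → ℝ), IsProbabilityMeasure p → IsIidLaw p (Proc p))
    (H₀ H₁ : Set (Measure (Fin d → ℝ)))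
    (hprob : ∀ p ∈ H₀ ∪ H₁, IsProbabilityMeasure p)
    (hdisj : H₀ ∩ H₁ = ∅)
    (hsep : ∃ An Bn : ℕ → Set (Measure (Fin d → ℝ)),
      (∀ n, KSClosed (An n)) ∧ (∀ n, KSClosed (Bn n)) ∧
      (∀ n, An n ⊆ An (n + 1)) ∧ (∀ n, Bn n ⊆ Bn (n + 1)) ∧
      (⋃ n, An n) = H₀ ∧ (⋃ n, Bn n) = H₁ ∧ ∀ n, An n ∩ Bn n = ∅) :
    ∃ Φ : (n : ℕ) → (Fin n → (Fin d → ℝ)) → Bool,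
      ∀ p ∈ H₀ ∪ H₁, Proc p {ω | {n | ClsErrAt H₀ p Φ ω n}.Finite} = 1 := by
  obtain ⟨A, B, hAc, hBc, hA, hB, rfl, rfl, -⟩ := hsep
  refine ⟨predictor A B, fun p hp => ?_⟩
  have := hprob p hp
  have hP := hProc p this
  have := hP.isProbabilityMeasure
  obtain ⟨ε, hε, hchoose⟩ := exists_pos_choosesSecond_iff hAc hBc (monotone_nat_of_le_succ hA)
    (monotone_nat_of_le_succ hB) hdisj (fun q hq => have := hprob q hq; inferInstance) hp
  refine (measure_congr (ae_eq_univ.2 (ae_iff.1 ?_))).trans measure_univ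
  filter_upwards [hP.ae_eventually_ksDist_empiricalMeasure_le] with ω hω
  have hcorrect : ∀ᶠ n in cofinite, ¬ ClsErrAt (⋃ k, A k) p (predictor A B) ω n := by
    rw [Nat.cofinite_eq_atTop]
    filter_upwards [eventually_predictor_eq hε hchoose hω] with n hn
    rw [ClsErrAt, hn]
    exact not_iff_self
  simpa using eventually_cofinite.1 hcorrect

end Stmt15
end

section
/- Let X_1, …, X_n be i.i.d. real random variables with E[X_1] = u and E[|X_1|^p] = M < ∞ for some p > 1, and let X̄ = (X_1 + ⋯ + X_n)/n. Then for every ε > 0 there is a constant C (depending only on ε, M and p) such that Pr(|X̄ − u| ≥ ε) ≤ C / n^{p−1}. -/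
/-!
Applied to `Xᵢ - u` and to `u - Xᵢ`, it suffices to bound `P(∑ Yᵢ ≥ ε n)` for independent `Yᵢ`
with `E Yᵢ ≤ 0` and `E|Yᵢ|^p ≤ K`. Truncate at `y = b n`. By Markov, some `Yᵢ` exceeds `y` with
probability at most `n K / y^p = O(n^{1-p})`. The truncated variables `min Yᵢ y` are bounded above,
so for `q = min p 2` the inequality `eˣ ≤ 1 + x + |x|^q e^{λ y}` (valid for `x ≤ λ y`) bounds
their moment generating function by `exp (λ^q e^{λ y} (1 + K))`. Chernoff's bound at
`λ = 2 (p - 1) log n / (ε n)` gives `n^{-2(p-1)} exp (n λ^q e^{λ y} (1 + K))`, and `b` is chosen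
so that `e^{λ y} = n^{(q-1)/2}`, which keeps the exponent bounded since `n λ^q ≈ n^{1-q} log^q n`.
-/

open MeasureTheory ProbabilityTheory Real

namespace Stmt17

lemma exp_le_one_add_add_abs_rpow_mul_exp {q b x : ℝ} (hq1 : 1 < q) (hq2 : q ≤ 2) (hb : 0 ≤ b)
    (hx : x ≤ b) : exp x ≤ 1 + x + |x| ^ q * exp b := by
  have hqb : |x| ^ q ≤ |x| ^ q * exp b := le_mul_of_one_le_right (by positivity) (one_le_exp hb)
  rcases le_or_gt |x| 1 with hx1 | hx1
  · have htaylor : exp x - 1 - x ≤ x ^ 2 := (le_abs_self _).trans (abs_exp_sub_one_sub_id_le hx1)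
    have hsq : x ^ 2 ≤ |x| ^ q := by
      rw [← sq_abs, ← rpow_natCast]
      exact rpow_le_rpow_of_exponent_ge' (abs_nonneg x) hx1 (by linarith) (by norm_num [hq2])
    linarith
  · have hxq : |x| ≤ |x| ^ q := by
      simpa using rpow_le_rpow_of_exponent_le hx1.le hq1.le
    rcases le_or_gt 0 x with hx0 | hx0
    · have : exp x ≤ |x| ^ q * exp b :=
        (exp_le_exp.mpr hx).trans (le_mul_of_one_le_left (exp_pos b).le (by linarith))
      linarith
    · have : exp x ≤ 1 := exp_le_one_iff.mpr hx0.le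
      rw [abs_of_neg hx0] at hxq hqb ⊢
      linarith

lemma rpow_le_one_add_rpow {a s t : ℝ} (ha : 0 ≤ a) (hs : 0 ≤ s) (hst : s ≤ t) :
    a ^ s ≤ 1 + a ^ t := by
  rcases le_or_gt a 1 with h | h
  · linarith [rpow_le_one ha h hs, rpow_nonneg ha t]
  · linarith [rpow_le_rpow_of_exponent_le h.le hst]

lemma add_rpow_le_two_rpow_mul {a b p : ℝ} (ha : 0 ≤ a) (hb : 0 ≤ b) (hp : 1 ≤ p) :
    (a + b) ^ p ≤ 2 ^ (p - 1) * (a ^ p + b ^ p) := by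
  have := NNReal.rpow_add_le_mul_rpow_add_rpow ⟨a, ha⟩ ⟨b, hb⟩ hp
  exact_mod_cast this

lemma exists_mul_rpow_log_div_mul_rpow_le {q : ℝ} (hq : 1 < q) {A : ℝ} (hA : 0 ≤ A) :
    ∃ D, ∀ N : ℝ, 1 ≤ N → N * ((A * log N / N) ^ q * N ^ ((q - 1) / 2)) ≤ D := by
  set s := (q - 1) / (4 * q)
  have hs : 0 < s := by positivity
  refine ⟨(A / s) ^ q, fun N hN => ?_⟩
  have hN0 : 0 < N := by linarith
  have hlog : 0 ≤ log N := log_nonneg hN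
  have hlogq : log N ^ q ≤ N ^ ((q - 1) / 4) / s ^ q := by
    calc log N ^ q ≤ (N ^ s / s) ^ q :=
          rpow_le_rpow hlog (log_le_rpow_div hN0.le hs) (by linarith)
      _ = N ^ ((q - 1) / 4) / s ^ q := by
        rw [div_rpow (by positivity) hs.le, ← rpow_mul hN0.le]
        congr 2
        simp only [s]
        field_simp
  calc N * ((A * log N / N) ^ q * N ^ ((q - 1) / 2))
      = A ^ q * log N ^ q * (N * N ^ ((q - 1) / 2) / N ^ q) := by
        rw [div_rpow (by positivity) hN0.le, mul_rpow hA hlog]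
        ring
    _ ≤ A ^ q * (N ^ ((q - 1) / 4) / s ^ q) * (N * N ^ ((q - 1) / 2) / N ^ q) := by gcongr
    _ = (A / s) ^ q * N ^ (-((q - 1) / 4)) := by
        have hexp : N ^ ((q - 1) / 4) * (N * N ^ ((q - 1) / 2) / N ^ q) =
            N ^ (-((q - 1) / 4)) := by
          rw [← rpow_one_add' hN0.le (by linarith), ← rpow_sub hN0, ← rpow_add hN0]
          ring_nf
        rw [div_rpow hA hs.le, ← hexp]
        ring
    _ ≤ (A / s) ^ q := mul_le_of_le_one_right (by positivity)
        (rpow_le_one_of_one_le_of_nonpos hN (by linarith))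

lemma setOf_le_sum_subset_union {Ω ι : Type*} [Fintype ι] (Y : ι → Ω → ℝ) (a y : ℝ) :
    {ω | a ≤ ∑ i, Y i ω} ⊆ (⋃ i, {ω | y < Y i ω}) ∪ {ω | a ≤ ∑ i, min (Y i ω) y} := by
  intro ω hω
  rcases exists_or_forall_not (fun i => y < Y i ω) with ⟨i, hi⟩ | hall
  · exact Or.inl (Set.mem_iUnion.mpr ⟨i, hi⟩)
  · exact Or.inr (by simpa only [Set.mem_ofPred_eq, min_eq_left (not_lt.mp (hall _))] using hω)

section Tails

variable {Ω ι : Type*} [MeasurableSpace Ω] {μ : Measure Ω} [IsFiniteMeasure μ]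

lemma measureReal_lt_le_integral_rpow_div {Y : Ω → ℝ} {p y : ℝ} (hp : 0 < p) (hy : 0 < y)
    (hpint : Integrable (fun ω => |Y ω| ^ p) μ) :
    μ.real {ω | y < Y ω} ≤ (∫ ω, |Y ω| ^ p ∂μ) / y ^ p := by
  have hyp : 0 < y ^ p := by positivity
  have hsub : {ω | y < Y ω} ⊆ {ω | y ^ p ≤ |Y ω| ^ p} := fun ω hω =>
    rpow_le_rpow hy.le ((le_of_lt hω).trans (le_abs_self _)) hp.le
  have hmarkov := mul_meas_ge_le_integral_of_nonneg
    (ae_of_all μ fun ω => rpow_nonneg (abs_nonneg (Y ω)) p) hpint (y ^ p)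
  rw [le_div_iff₀ hyp, mul_comm]
  exact (mul_le_mul_of_nonneg_left (measureReal_mono hsub) hyp.le).trans hmarkov

lemma measureReal_iUnion_lt_le [Fintype ι] {Y : ι → Ω → ℝ} {p y K : ℝ}
    (hp : 0 < p) (hy : 0 < y) (hpint : ∀ i, Integrable (fun ω => |Y i ω| ^ p) μ)
    (hmom : ∀ i, ∫ ω, |Y i ω| ^ p ∂μ ≤ K) :
    μ.real (⋃ i, {ω | y < Y i ω}) ≤ Fintype.card ι * (K / y ^ p) := by
  calc μ.real (⋃ i, {ω | y < Y i ω}) ≤ ∑ i, μ.real {ω | y < Y i ω} :=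
        measureReal_iUnion_fintype_le _
    _ ≤ ∑ _i : ι, K / y ^ p := Finset.sum_le_sum fun i _ =>
        (measureReal_lt_le_integral_rpow_div hp hy (hpint i)).trans
          (div_le_div_of_nonneg_right (hmom i) (by positivity))
    _ = Fintype.card ι * (K / y ^ p) := by simp

lemma integrable_exp_mul_of_le {Z : Ω → ℝ} {t y : ℝ} (hZ : AEMeasurable Z μ)
    (ht : 0 ≤ t) (hZy : ∀ ω, Z ω ≤ y) : Integrable (fun ω => exp (t * Z ω)) μ := by
  refine Integrable.mono' (integrable_const (exp (t * y)))
    (hZ.const_mul t).exp.aestronglyMeasurable (ae_of_all μ fun ω => ?_)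
  rw [norm_eq_abs, abs_exp]
  exact exp_le_exp.mpr (mul_le_mul_of_nonneg_left (hZy ω) ht)

lemma measureReal_sum_ge_le_exp [Fintype ι] {Z : ι → Ω → ℝ} (hind : iIndepFun Z μ)
    (hm : ∀ i, Measurable (Z i)) {t c : ℝ} (ht : 0 ≤ t)
    (hint : ∀ i, Integrable (fun ω => exp (t * Z i ω)) μ) (hmgf : ∀ i, mgf (Z i) μ t ≤ exp c)
    (a : ℝ) : μ.real {ω | a ≤ ∑ i, Z i ω} ≤ exp (-t * a + Fintype.card ι * c) := by
  have hchernoff := measure_ge_le_exp_mul_mgf a ht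
    (hind.integrable_exp_mul_sum hm (s := Finset.univ) fun i _ => hint i)
  have hprod : mgf (∑ i, Z i) μ t ≤ exp (Fintype.card ι * c) := by
    rw [hind.mgf_sum hm, exp_nat_mul, ← Finset.card_univ, ← Finset.prod_const]
    exact Finset.prod_le_prod (fun i _ => mgf_nonneg) fun i _ => hmgf i
  simp only [Finset.sum_apply] at hchernoff
  rw [exp_add]
  exact hchernoff.trans (mul_le_mul_of_nonneg_left hprod (exp_pos _).le)

end Tails

section Truncation

variable {Ω ι : Type*} [MeasurableSpace Ω] {μ : Measure Ω} [IsProbabilityMeasure μ]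

lemma mgf_le_exp_of_le {Z : Ω → ℝ} {q y t K : ℝ} (hq1 : 1 < q) (hq2 : q ≤ 2) (hy : 0 ≤ y)
    (ht : 0 ≤ t) (hZy : ∀ ω, Z ω ≤ y) (hint : Integrable Z μ)
    (hqint : Integrable (fun ω => |Z ω| ^ q) μ) (hmean : ∫ ω, Z ω ∂μ ≤ 0)
    (hmom : ∫ ω, |Z ω| ^ q ∂μ ≤ K) :
    mgf Z μ t ≤ exp (t ^ q * exp (t * y) * K) := by
  set c := t ^ q * exp (t * y)
  have hpt ω : exp (t * Z ω) ≤ 1 + t * Z ω + c * |Z ω| ^ q := by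
    have := exp_le_one_add_add_abs_rpow_mul_exp hq1 hq2 (mul_nonneg ht hy)
      (mul_le_mul_of_nonneg_left (hZy ω) ht)
    rwa [abs_mul, abs_of_nonneg ht, mul_rpow ht (abs_nonneg _), mul_right_comm] at this
  have hlin : Integrable (fun ω => 1 + t * Z ω) μ := (integrable_const 1).add (hint.const_mul t)
  calc mgf Z μ t ≤ ∫ ω, (1 + t * Z ω + c * |Z ω| ^ q) ∂μ :=
        integral_mono (integrable_exp_mul_of_le hint.aemeasurable ht hZy)
          (hlin.add (hqint.const_mul c)) hpt
    _ = 1 + t * ∫ ω, Z ω ∂μ + c * ∫ ω, |Z ω| ^ q ∂μ := by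
        rw [integral_add hlin (hqint.const_mul c), integral_add (integrable_const 1)
          (hint.const_mul t), integral_const_mul, integral_const_mul]
        simp
    _ ≤ 1 + c * K := by
        have : 0 ≤ c := by positivity
        nlinarith [mul_nonpos_of_nonneg_of_nonpos ht hmean, mul_le_mul_of_nonneg_left hmom this]
    _ ≤ exp (c * K) := by linarith [add_one_le_exp (c * K)]

lemma measureReal_sum_min_ge_le [Fintype ι] {Y : ι → Ω → ℝ} {p q y t K : ℝ} (hq1 : 1 < q)
    (hq2 : q ≤ 2) (hqp : q ≤ p) (hy : 0 ≤ y) (ht : 0 ≤ t) (hind : iIndepFun Y μ)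
    (hm : ∀ i, Measurable (Y i)) (hint : ∀ i, Integrable (Y i) μ)
    (hpint : ∀ i, Integrable (fun ω => |Y i ω| ^ p) μ) (hmean : ∀ i, ∫ ω, Y i ω ∂μ ≤ 0)
    (hmom : ∀ i, ∫ ω, |Y i ω| ^ p ∂μ ≤ K) (a : ℝ) :
    μ.real {ω | a ≤ ∑ i, min (Y i ω) y} ≤
      exp (-t * a + Fintype.card ι * (t ^ q * exp (t * y) * (1 + K))) := by
  set Z : ι → Ω → ℝ := fun i ω => min (Y i ω) y
  have hZm i : Measurable (Z i) := (hm i).min measurable_const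
  have hZY i ω : |Z i ω| ≤ |Y i ω| :=
    abs_le.mpr ⟨le_min (neg_abs_le _) ((neg_nonpos.mpr (abs_nonneg _)).trans hy),
      (min_le_left _ _).trans (le_abs_self _)⟩
  have hZq i ω : |Z i ω| ^ q ≤ 1 + |Y i ω| ^ p :=
    (rpow_le_rpow (abs_nonneg _) (hZY i ω) (by linarith)).trans
      (rpow_le_one_add_rpow (abs_nonneg _) (by linarith) hqp)
  have hZint i : Integrable (Z i) μ :=
    (hint i).abs.mono' (hZm i).aestronglyMeasurable (ae_of_all μ fun ω => hZY i ω)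
  have hdom i : Integrable (fun ω => 1 + |Y i ω| ^ p) μ := (integrable_const 1).add (hpint i)
  have hZqint i : Integrable (fun ω => |Z i ω| ^ q) μ :=
    (hdom i).mono' ((hZm i).abs.pow_const q).aestronglyMeasurable
      (ae_of_all μ fun ω => by rw [norm_of_nonneg (by positivity)]; exact hZq i ω)
  have hZmom i : ∫ ω, |Z i ω| ^ q ∂μ ≤ 1 + K := by
    calc ∫ ω, |Z i ω| ^ q ∂μ ≤ ∫ ω, (1 + |Y i ω| ^ p) ∂μ :=
          integral_mono (hZqint i) (hdom i) (hZq i)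
      _ ≤ 1 + K := by
        rw [integral_add (integrable_const 1) (hpint i)]
        simpa using hmom i
  have hZmean i : ∫ ω, Z i ω ∂μ ≤ 0 :=
    (integral_mono (hZint i) (hint i) fun ω => min_le_left _ _).trans (hmean i)
  exact measureReal_sum_ge_le_exp (hind.comp _ fun _ => measurable_id.min measurable_const) hZm ht
    (fun i => integrable_exp_mul_of_le (hZm i).aemeasurable ht fun ω => min_le_right _ _)
    (fun i => mgf_le_exp_of_le hq1 hq2 hy ht (fun ω => min_le_right _ _) (hZint i) (hZqint i)
      (hZmean i) (hZmom i)) a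

end Truncation

theorem exists_measureReal_sum_ge_le_div_rpow {p K ε : ℝ} (hp : 1 < p) (hK : 0 ≤ K)
    (hε : 0 < ε) :
    ∃ C : ℝ, ∀ (Ω : Type) [MeasurableSpace Ω] (μ : Measure Ω) [IsProbabilityMeasure μ]
      (n : ℕ) (Y : Fin n → Ω → ℝ), 0 < n → (∀ i, Measurable (Y i)) → iIndepFun Y μ →
      (∀ i, Integrable (Y i) μ) → (∀ i, Integrable (fun ω => |Y i ω| ^ p) μ) →
      (∀ i, ∫ ω, Y i ω ∂μ ≤ 0) → (∀ i, ∫ ω, |Y i ω| ^ p ∂μ ≤ K) →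
      μ.real {ω | ε * n ≤ ∑ i, Y i ω} ≤ C / (n : ℝ) ^ (p - 1) := by
  set q := min p 2
  have hq1 : 1 < q := lt_min hp one_lt_two
  set A := 2 * (p - 1) / ε
  have hA : 0 < A := div_pos (by linarith) hε
  set b := (q - 1) / (2 * A)
  have hb : 0 < b := div_pos (by linarith) (by positivity)
  obtain ⟨D, hD⟩ := exists_mul_rpow_log_div_mul_rpow_le hq1 hA.le
  refine ⟨K / b ^ p + exp (D * (1 + K)), ?_⟩
  intro Ω _ μ _ n Y hn hm hind hint hpint hmean hmom
  have hN : (1 : ℝ) ≤ n := by exact_mod_cast hn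
  have hN0 : 0 < (n : ℝ) := by linarith
  have hlog : 0 ≤ log (n : ℝ) := log_nonneg hN
  set t := A * log (n : ℝ) / (n : ℝ)
  have htail : μ.real (⋃ i, {ω | b * (n : ℝ) < Y i ω}) ≤ K / b ^ p / (n : ℝ) ^ (p - 1) := by
    refine (measureReal_iUnion_lt_le (by linarith) (by positivity) hpint hmom).trans_eq ?_
    rw [Fintype.card_fin, mul_rpow hb.le hN0.le, rpow_sub_one hN0.ne']
    field_simp
  have htrunc : μ.real {ω | ε * (n : ℝ) ≤ ∑ i, min (Y i ω) (b * (n : ℝ))} ≤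
      exp (D * (1 + K)) / (n : ℝ) ^ (p - 1) := by
    refine (measureReal_sum_min_ge_le hq1 (min_le_right _ _) (min_le_left _ _) (by positivity)
      (t := t) (by positivity) hind hm hint hpint hmean hmom _).trans ?_
    have hty : exp (t * (b * (n : ℝ))) = (n : ℝ) ^ ((q - 1) / 2) := by
      rw [rpow_def_of_pos hN0]
      congr 1
      simp only [t, b]
      field_simp
    have htε : -t * (ε * (n : ℝ)) = -(2 * (p - 1)) * log (n : ℝ) := by
      simp only [t, A]
      field_simp
    rw [Fintype.card_fin, hty, htε]
    calc exp (-(2 * (p - 1)) * log (n : ℝ) +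
          (n : ℝ) * (t ^ q * (n : ℝ) ^ ((q - 1) / 2) * (1 + K)))
        ≤ exp (-(p - 1) * log (n : ℝ) + D * (1 + K)) := by
          gcongr exp ?_
          nlinarith [hD n hN]
      _ = exp (D * (1 + K)) / (n : ℝ) ^ (p - 1) := by
          rw [exp_add, neg_mul, exp_neg, rpow_def_of_pos hN0, mul_comm (log _)]
          ring
  calc μ.real {ω | ε * (n : ℝ) ≤ ∑ i, Y i ω}
      ≤ μ.real ((⋃ i, {ω | b * (n : ℝ) < Y i ω}) ∪
          {ω | ε * (n : ℝ) ≤ ∑ i, min (Y i ω) (b * (n : ℝ))}) :=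
        measureReal_mono (setOf_le_sum_subset_union Y _ _)
    _ ≤ K / b ^ p / (n : ℝ) ^ (p - 1) + exp (D * (1 + K)) / (n : ℝ) ^ (p - 1) :=
        (measureReal_union_le _ _).trans (add_le_add htail htrunc)
    _ = (K / b ^ p + exp (D * (1 + K))) / (n : ℝ) ^ (p - 1) := by ring

lemma le_sum_sub_or_le_sum_sub_of_le_abs {n : ℕ} (hn : 0 < n) {x : Fin n → ℝ} {u ε : ℝ}
    (h : ε ≤ |(∑ i, x i) / n - u|) : ε * n ≤ ∑ i, (x i - u) ∨ ε * n ≤ ∑ i, (u - x i) := by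
  have hN : (0 : ℝ) < n := by exact_mod_cast hn
  have hmean : (∑ i, x i) / n - u = (∑ i, (x i - u)) / n := by
    rw [Finset.sum_sub_distrib, Finset.sum_const, Finset.card_fin, nsmul_eq_mul]
    field_simp
  have hneg : ∑ i, (u - x i) = -∑ i, (x i - u) := by
    rw [← Finset.sum_neg_distrib]
    simp only [neg_sub]
  rwa [hneg, ← le_abs, ← le_div_iff₀ hN, ← abs_of_pos hN, ← abs_div, ← hmean]

lemma integrable_abs_rpow_of_memLp {Ω : Type*} [MeasurableSpace Ω] {μ : Measure Ω} {X : Ω → ℝ}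
    {p : ℝ} (hp : 0 < p) (hX : MemLp X (ENNReal.ofReal p) μ) :
    Integrable (fun ω => |X ω| ^ p) μ := by
  simpa [norm_eq_abs, ENNReal.toReal_ofReal hp.le] using
    hX.integrable_norm_rpow (by simpa using hp) ENNReal.ofReal_ne_top

section Centering

variable {Ω : Type*} [MeasurableSpace Ω] {μ : Measure Ω} [IsProbabilityMeasure μ]

lemma abs_integral_le_one_add_integral_abs_rpow {X : Ω → ℝ} {p : ℝ} (hp : 1 ≤ p)
    (hint : Integrable X μ) (hpint : Integrable (fun ω => |X ω| ^ p) μ) :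
    |∫ ω, X ω ∂μ| ≤ 1 + ∫ ω, |X ω| ^ p ∂μ := by
  calc |∫ ω, X ω ∂μ| ≤ ∫ ω, |X ω| ∂μ := abs_integral_le_integral_abs
    _ ≤ ∫ ω, (1 + |X ω| ^ p) ∂μ :=
        integral_mono hint.abs ((integrable_const 1).add hpint) fun ω => by
          simpa using rpow_le_one_add_rpow (abs_nonneg (X ω)) zero_le_one hp
    _ = 1 + ∫ ω, |X ω| ^ p ∂μ := by
        rw [integral_add (integrable_const 1) hpint]
        simp

lemma integral_abs_sub_rpow_le {X : Ω → ℝ} {p : ℝ} (hp : 1 ≤ p) (c : ℝ)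
    (hpint : Integrable (fun ω => |X ω| ^ p) μ) :
    ∫ ω, |X ω - c| ^ p ∂μ ≤ 2 ^ (p - 1) * (∫ ω, |X ω| ^ p ∂μ + |c| ^ p) := by
  have hpt ω : |X ω - c| ^ p ≤ 2 ^ (p - 1) * (|X ω| ^ p + |c| ^ p) :=
    (rpow_le_rpow (abs_nonneg _) (abs_sub _ _) (by linarith)).trans
      (add_rpow_le_two_rpow_mul (abs_nonneg _) (abs_nonneg _) hp)
  calc ∫ ω, |X ω - c| ^ p ∂μ ≤ ∫ ω, 2 ^ (p - 1) * (|X ω| ^ p + |c| ^ p) ∂μ :=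
        integral_mono_of_nonneg (ae_of_all μ fun ω => by positivity)
          ((hpint.add (integrable_const _)).const_mul _) (ae_of_all μ hpt)
    _ = 2 ^ (p - 1) * (∫ ω, |X ω| ^ p ∂μ + |c| ^ p) := by
        rw [integral_const_mul, integral_add hpint (integrable_const _)]
        simp

end Centering

/-- If `X_1, …, X_n` are i.i.d. real random variables with mean `u` and finite
`p`-th absolute moment `M` (for some `p > 1`), then `Pr(|X̄ − u| ≥ ε) ≤ C / n^{p−1}`, where the
constant `C` depends only on `ε`, `M` and `p`. -/
theorem pth_moment_concentration (p : ℝ) (hp : 1 < p) (M : ℝ) (ε : ℝ) (hε : 0 < ε) :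
    ∃ C : ℝ,
      ∀ (Ω : Type) [MeasurableSpace Ω] (μ : Measure Ω) [IsProbabilityMeasure μ]
        (n : ℕ) (X : Fin n → Ω → ℝ) (u : ℝ),
        0 < n →
        (∀ i, Measurable (X i)) →
        iIndepFun X μ →
        (∀ i j, IdentDistrib (X i) (X j) μ μ) →
        (∀ i, MemLp (X i) (ENNReal.ofReal p) μ) →
        (∀ i, ∫ ω, |X i ω| ^ p ∂μ = M) →
        (∀ i, ∫ ω, X i ω ∂μ = u) →
        μ {ω | ε ≤ |(∑ i, X i ω) / (n : ℝ) - u|} ≤ ENNReal.ofReal (C / (n : ℝ) ^ (p - 1)) := by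
  have hp0 : 0 < p := by linarith
  obtain ⟨C, hC⟩ := exists_measureReal_sum_ge_le_div_rpow hp
    (K := 2 ^ (p - 1) * (|M| + (1 + |M|) ^ p)) (by positivity) hε
  refine ⟨2 * C, fun Ω _ μ _ n X u hn hm hind _ hLp hmom hmean => ?_⟩
  have hint i : Integrable (X i) μ := (hLp i).integrable (by simpa using hp.le)
  have hpint i : Integrable (fun ω => |X i ω - u| ^ p) μ :=
    integrable_abs_rpow_of_memLp hp0 ((hLp i).sub (memLp_const u))
  have hcmom i : ∫ ω, |X i ω - u| ^ p ∂μ ≤ 2 ^ (p - 1) * (|M| + (1 + |M|) ^ p) := by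
    have hXp := integrable_abs_rpow_of_memLp hp0 (hLp i)
    have hu : |u| ≤ 1 + |M| := by
      have := abs_integral_le_one_add_integral_abs_rpow hp.le (hint i) hXp
      rw [hmean i, hmom i] at this
      linarith [le_abs_self M]
    refine (integral_abs_sub_rpow_le hp.le u hXp).trans ?_
    rw [hmom i]
    gcongr
    exact le_abs_self M
  have hupper := hC Ω μ n (fun i ω => X i ω - u) hn (fun i => (hm i).sub_const u)
    (hind.comp _ fun _ => measurable_sub_const u) (fun i => (hint i).sub (integrable_const u))
    hpint (fun i => by simp [integral_sub (hint i) (integrable_const u), hmean i]) hcmom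
  have hlower := hC Ω μ n (fun i ω => u - X i ω) hn (fun i => (hm i).const_sub u)
    (hind.comp _ fun _ => measurable_const_sub u) (fun i => (integrable_const u).sub (hint i))
    (by simpa only [abs_sub_comm u] using hpint)
    (fun i => by simp [integral_sub (integrable_const u) (hint i), hmean i])
    (by simpa only [abs_sub_comm u] using hcmom)
  rw [← ENNReal.ofReal_toReal (measure_ne_top μ _)]
  refine ENNReal.ofReal_le_ofReal ?_
  calc μ.real {ω | ε ≤ |(∑ i, X i ω) / (n : ℝ) - u|}
      ≤ μ.real ({ω | ε * n ≤ ∑ i, (X i ω - u)} ∪ {ω | ε * n ≤ ∑ i, (u - X i ω)}) :=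
        measureReal_mono fun ω => le_sum_sub_or_le_sum_sub_of_le_abs hn
    _ ≤ C / (n : ℝ) ^ (p - 1) + C / (n : ℝ) ^ (p - 1) :=
        (measureReal_union_le _ _).trans (add_le_add hupper hlower)
    _ = 2 * C / (n : ℝ) ^ (p - 1) := by ring

end Stmt17
end

section
/- Let {A_n} and {B_n} be countable collections of closed sets of a metric space, and set A = ⋃_n A_n, B = ⋃_n B_n. If A ∩ B = ∅, then there exist collections {A'_n} and {B'_n} of sets, nested (A'_n ⊆ A'_{n+1}, B'_n ⊆ B'_{n+1}), with A = ⋃_n A'_n, B = ⋃_n B'_n, and inf{d(x, y) : x ∈ A'_n, y ∈ B'_n} > 0 for every n. -/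
/-!
Replacing `A n` and `B n` by the partial unions `A 0 ∪ … ∪ A n` and `B 0 ∪ … ∪ B n`, we may assume
both sequences increasing. A point `x ∈ A k` lies outside the closed set `B k`, hence at some
positive distance from it; so `x` is put into `A' n` as soon as `k ≤ n` and `1 / (n + 1)` is below
that distance. Since `x` is only required to be far from `B k`, not from the growing `B n`, every
point eventually enters. For `x ∈ A k` and `y ∈ B l` chosen this way at stage `n`, monotonicity gives
`y ∈ B k` if `l ≤ k` and `x ∈ A l` otherwise, and either way `dist x y ≥ 1 / (n + 1)`.
-/

open Set

namespace Stmt19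

section PseudoMetric

variable {S : Type*} [PseudoMetricSpace S]

theorem exists_pos_forall_le_dist_of_notMem {C : Set S} (hC : IsClosed C) {x : S} (hx : x ∉ C) :
    ∃ ε > 0, ∀ y ∈ C, ε ≤ dist x y := by
  obtain ⟨ε, hε, hball⟩ := Metric.mem_nhds_iff.1 (hC.isOpen_compl.mem_nhds hx)
  exact ⟨ε, hε, fun y hy => not_lt.1 fun h => hball (Metric.mem_ball'.2 h) hy⟩

def separatedPart (A B : ℕ → Set S) (n : ℕ) : Set S :=
  {x | ∃ k ≤ n, x ∈ A k ∧ ∀ y ∈ B k, 1 / ((n : ℝ) + 1) ≤ dist x y}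

theorem monotone_separatedPart (A B : ℕ → Set S) : Monotone (separatedPart A B) := by
  rintro n m hnm x ⟨k, hk, hxA, hfar⟩
  have hr : 1 / ((m : ℝ) + 1) ≤ 1 / ((n : ℝ) + 1) := by gcongr
  exact ⟨k, hk.trans hnm, hxA, fun y hy => hr.trans (hfar y hy)⟩

theorem iUnion_separatedPart {A B : ℕ → Set S} (hB : ∀ k, IsClosed (B k))
    (hAB : ∀ k, Disjoint (A k) (B k)) : ⋃ n, separatedPart A B n = ⋃ k, A k := by
  refine Subset.antisymm (iUnion_subset fun n x ⟨k, _, hxA, _⟩ => mem_iUnion_of_mem k hxA) ?_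
  rintro x hx
  obtain ⟨k, hxA⟩ := mem_iUnion.1 hx
  obtain ⟨ε, hε, hfar⟩ :=
    exists_pos_forall_le_dist_of_notMem (hB k) (disjoint_left.1 (hAB k) hxA)
  obtain ⟨m, hm⟩ := exists_nat_one_div_lt hε
  refine mem_iUnion_of_mem (max k m) ⟨k, le_max_left k m, hxA, fun y hy => ?_⟩
  calc 1 / ((max k m : ℕ) + 1 : ℝ) ≤ 1 / ((m : ℝ) + 1) := by gcongr; exact le_max_right k m
    _ ≤ ε := hm.le
    _ ≤ dist x y := hfar y hy

theorem le_dist_of_mem_separatedPart {A B : ℕ → Set S} (hA : Monotone A) (hB : Monotone B)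
    {n : ℕ} {x y : S} (hx : x ∈ separatedPart A B n) (hy : y ∈ separatedPart B A n) :
    1 / ((n : ℝ) + 1) ≤ dist x y := by
  obtain ⟨k, -, hxA, hxfar⟩ := hx
  obtain ⟨l, -, hyB, hyfar⟩ := hy
  rcases le_total l k with hlk | hkl
  · exact hxfar y (hB hlk hyB)
  · exact dist_comm y x ▸ hyfar x (hA hkl hxA)

end PseudoMetric

theorem isClosed_accumulate {X : Type*} [TopologicalSpace X] {s : ℕ → Set X}
    (hs : ∀ n, IsClosed (s n)) (n : ℕ) : IsClosed (accumulate s n) :=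
  (finite_le_nat n).isClosed_biUnion fun k _ => hs k

/-- Let `{A_n}` and `{B_n}` be countable collections of closed sets of a
metric space with `(⋃_n A_n) ∩ (⋃_n B_n) = ∅`. Then there are nested collections `{A'_n}`,
`{B'_n}` with the same unions such that for every `n` the sets `A'_n` and `B'_n` are at positive
distance from each other. -/
theorem exists_nested_positively_separated {S : Type*} [MetricSpace S]
    (A B : ℕ → Set S) (hA : ∀ n, IsClosed (A n)) (hB : ∀ n, IsClosed (B n))
    (hdisj : (⋃ n, A n) ∩ (⋃ n, B n) = ∅) :
    ∃ A' B' : ℕ → Set S,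
      (∀ n, A' n ⊆ A' (n + 1)) ∧ (∀ n, B' n ⊆ B' (n + 1)) ∧
      (⋃ n, A' n) = (⋃ n, A n) ∧ (⋃ n, B' n) = (⋃ n, B n) ∧
      ∀ n, ∃ δ : ℝ, 0 < δ ∧ ∀ x ∈ A' n, ∀ y ∈ B' n, δ ≤ dist x y := by
  have hAB : ∀ k, Disjoint (accumulate A k) (accumulate B k) := fun k =>
    (disjoint_iff_inter_eq_empty.2 hdisj).mono
      (accumulate_subset_iUnion k) (accumulate_subset_iUnion k)
  refine ⟨separatedPart (accumulate A) (accumulate B), separatedPart (accumulate B) (accumulate A),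
    fun n => monotone_separatedPart _ _ n.le_succ, fun n => monotone_separatedPart _ _ n.le_succ,
    ?_, ?_, fun n => ⟨1 / ((n : ℝ) + 1), by positivity, fun x hx y hy =>
      le_dist_of_mem_separatedPart monotone_accumulate monotone_accumulate hx hy⟩⟩
  · rw [iUnion_separatedPart (isClosed_accumulate hB) hAB, iUnion_accumulate]
  · rw [iUnion_separatedPart (isClosed_accumulate hA) fun k => (hAB k).symm, iUnion_accumulate]

end Stmt19
end
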